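/- arXiv:math/9504202 — 8 statements merged into one kernel-verified Lean document; each statement's English description precedes it below -/
import Mathlib

section
/- Fix n ≥ 2 and k ≥ 1. Let F be the smallest set of functions from (Fin n)^k to Fin n that contains the k coordinate projections and is closed under the pointwise operations (f, g) ↦ max(f, g) (with respect to the order 0 < 1 < ⋯ < n−1 on Fin n) and f ↦ ∼ ∘ f, where ∼ i = i − 1 (mod n). Then F consists of all functions from (Fin n)^k to Fin n (Post's n-valued logic is functionally complete). -/
/-!
Since `y + 1` wraps around only at the top, `satSucc y = max (y + 1) y` is the truncated
successor, and its iterates `satSucc^[m] y = min (y + m) top` together with the cyclic shifts produce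
the characteristic function of `0` and then, after rescaling, every `Pi.single c v`. Hence the
unary operations preserving a set of functions closed under `∨` and `∼` are all unary
operations. For `k`-ary functions, `x ↦ ⋁ᵢ (xᵢ - aᵢ)` vanishes exactly at `a`, so composing it
with `Pi.single 0 v` gives `Pi.single a v`, and every function is the join of such singles.
-/

namespace Post

variable {n : ℕ}

/-- `F` is a subalgebra of the power `P_{n+1} ^ α` of the Post algebra on `Fin (n + 1)`. -/
structure IsPostSubalgebra {α : Type*} (F : Set (α → Fin (n + 1))) : Prop where
  max_mem {f g : α → Fin (n + 1)} : f ∈ F → g ∈ F → (fun x => max (f x) (g x)) ∈ F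
  sub_one_mem {f : α → Fin (n + 1)} : f ∈ F → (fun x => f x - 1) ∈ F

def satSucc (y : Fin (n + 1)) : Fin (n + 1) := max (y + 1) y

theorem val_satSucc (y : Fin (n + 1)) : (satSucc y).val = min (y.val + 1) n := by
  have := y.isLt
  rw [satSucc, Fin.coe_max, Fin.val_add_one]
  split_ifs with h
  · simp [h]
  · have : y.val ≠ n := fun h' => h (Fin.ext h')
    omega

theorem val_iterate_satSucc (m : ℕ) (y : Fin (n + 1)) :
    (satSucc^[m] y).val = min (y.val + m) n := by
  induction m with
  | zero => simp [Nat.le_of_lt_succ y.isLt]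
  | succ m ih => rw [Function.iterate_succ_apply', val_satSucc, ih]; omega

theorem iterate_sub_one_val (c : Fin (n + 1)) : (fun y => y - 1)^[c.val] = fun y => y - c := by
  induction c using Fin.induction with
  | zero => funext y; simp
  | succ c ih =>
    rw [Fin.val_succ, ← Fin.val_castSucc, Function.iterate_succ', ih]
    funext y
    rw [Function.comp_apply, ← Fin.coeSucc_eq_succ, sub_add_eq_sub_sub]

theorem single_zero_last :
    (Pi.single 0 (Fin.last n) : Fin (n + 1) → Fin (n + 1)) = (· + 1) ∘ satSucc^[n - 1] := by
  funext y
  have hy := val_iterate_satSucc (n - 1) y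
  apply Fin.ext
  rw [Function.comp_apply, Fin.val_add_one, Pi.single_apply]
  have := y.isLt
  split_ifs with h1 h2 h2 <;> rw [Fin.ext_iff] at * <;> simp only [Fin.val_last, Fin.val_zero] at * <;> omega

theorem single_zero_eq (v : Fin (n + 1)) :
    (Pi.single 0 v : Fin (n + 1) → Fin (n + 1)) =
      (· - v.rev) ∘ satSucc^[v.rev.val] ∘ Pi.single 0 (Fin.last n) := by
  funext y
  rw [Function.comp_apply, Function.comp_apply, Pi.single_apply, Pi.single_apply]
  split_ifs
  · rw [Function.iterate_fixed (by simp [satSucc]), Fin.last_sub, Fin.rev_rev]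
  · rw [eq_comm, sub_eq_zero]
    exact Fin.ext (by rw [val_iterate_satSucc]; simp)

theorem single_eq_single_zero_comp_sub {G M : Type*} [AddGroup G] [DecidableEq G] [Zero M]
    (c : G) (v : M) :
    (Pi.single c v : G → M) = Pi.single 0 v ∘ (· - c) := by
  funext y
  simp [Pi.single_apply, sub_eq_zero]

namespace IsPostSubalgebra

variable {α : Type*} {F : Set (α → Fin (n + 1))}

theorem finset_sup'_mem (hF : IsPostSubalgebra F) {β : Type*} {s : Finset β} (hs : s.Nonempty)
    {g : β → α → Fin (n + 1)} (hg : ∀ b ∈ s, g b ∈ F) : (fun x => s.sup' hs (g · x)) ∈ F := by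
  induction hs using Finset.Nonempty.cons_induction with
  | singleton b => simpa using hg b (by simp)
  | cons b s hb hs ih =>
    simp only [Finset.sup'_cons hs]
    exact hF.max_mem (hg b (by simp)) (ih fun c hc => hg c (by simp [hc]))

theorem eq_univ_of_single_mem [Fintype α] [DecidableEq α] [Nonempty α] (hF : IsPostSubalgebra F)
    (hsingle : ∀ a v, Pi.single a v ∈ F) : F = Set.univ := by
  refine Set.eq_univ_of_forall fun h => ?_
  have h_eq : h = fun x => Finset.univ.sup' Finset.univ_nonempty fun a => Pi.single a (h a) x := by
    funext x
    refine le_antisymm (Finset.le_sup'_of_le _ (Finset.mem_univ x) (by simp)) ?_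
    refine Finset.sup'_le _ _ fun a _ => ?_
    rw [Pi.single_apply]
    split_ifs with hxa
    · rw [hxa]
    · exact Fin.zero_le _
  exact h_eq ▸ hF.finset_sup'_mem Finset.univ_nonempty fun a _ => hsingle a (h a)

theorem eq_univ_of_id_mem {U : Set (Fin (n + 1) → Fin (n + 1))} (hU : IsPostSubalgebra U)
    (hid : id ∈ U) (hcomp : ∀ u ∈ U, ∀ v ∈ U, u ∘ v ∈ U) : U = Set.univ := by
  have iterate_mem {u} (hu : u ∈ U) (m : ℕ) : u^[m] ∈ U := by
    induction m with
    | zero => exact hid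
    | succ m ih => exact hcomp _ ih _ hu
  have sub_mem (c : Fin (n + 1)) : (· - c) ∈ U :=
    iterate_sub_one_val c ▸ iterate_mem (hU.sub_one_mem hid) c.val
  have add_one_mem : (· + 1) ∈ U := by simpa using sub_mem (-1)
  have satSucc_mem : satSucc ∈ U := hU.max_mem add_one_mem hid
  have single_zero_last_mem : Pi.single 0 (Fin.last n) ∈ U :=
    single_zero_last ▸ hcomp _ add_one_mem _ (iterate_mem satSucc_mem _)
  refine hU.eq_univ_of_single_mem fun c v => ?_
  rw [single_eq_single_zero_comp_sub, single_zero_eq]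
  exact hcomp _ (hcomp _ (sub_mem _) _ (hcomp _ (iterate_mem satSucc_mem _) _ single_zero_last_mem))
    _ (sub_mem c)

theorem comp_mem (hF : IsPostSubalgebra F) (u : Fin (n + 1) → Fin (n + 1))
    {f : α → Fin (n + 1)} (hf : f ∈ F) : u ∘ f ∈ F := by
  have hU : {u : Fin (n + 1) → Fin (n + 1) | ∀ f ∈ F, u ∘ f ∈ F} = Set.univ :=
    eq_univ_of_id_mem ⟨fun hu hv f hf => hF.max_mem (hu f hf) (hv f hf),
      fun hu f hf => hF.sub_one_mem (hu f hf)⟩ (fun _ hf => hf)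
      fun _ hu _ hv f hf => hu _ (hv f hf)
  exact Set.eq_univ_iff_forall.mp hU u f hf

theorem eq_univ_of_proj_mem {ι : Type*} [Fintype ι] [DecidableEq ι] [Nonempty ι]
    {F : Set ((ι → Fin (n + 1)) → Fin (n + 1))} (hF : IsPostSubalgebra F)
    (hproj : ∀ i, (fun x => x i) ∈ F) : F = Set.univ := by
  refine hF.eq_univ_of_single_mem fun a v => ?_
  have hdist : (fun x => Finset.univ.sup' Finset.univ_nonempty (fun i => x i - a i)) ∈ F :=
    hF.finset_sup'_mem _ fun i _ => hF.comp_mem (· - a i) (hproj i)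
  convert hF.comp_mem (Pi.single 0 v) hdist using 1
  funext x
  have hdist_eq_zero : Finset.univ.sup' Finset.univ_nonempty (fun i => x i - a i) = 0 ↔ x = a := by
    rw [← nonpos_iff_eq_zero, Finset.sup'_le_iff, funext_iff]
    simp [sub_eq_zero]
  simp only [Function.comp_apply, Pi.single_apply, hdist_eq_zero]

end IsPostSubalgebra

end Post

open Post in
/-- Post's n-valued logic is functionally complete: every set of
functions (Fin n)^k → Fin n containing the projections and closed under pointwise
max and the cyclic shift i ↦ i − 1 (mod n) contains all functions; hence the
smallest such set consists of all functions. -/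
theorem stmt_5 (n k : ℕ) (hn : 2 ≤ n) (hk : 1 ≤ k)
    (F : Set ((Fin k → Fin n) → Fin n))
    (hproj : ∀ i : Fin k, (fun x : Fin k → Fin n => x i) ∈ F)
    (hmax : ∀ f g : (Fin k → Fin n) → Fin n, f ∈ F → g ∈ F →
      (fun x => max (f x) (g x)) ∈ F)
    (hshift : ∀ f : (Fin k → Fin n) → Fin n, f ∈ F →
      (fun x => f x - (⟨1, by omega⟩ : Fin n)) ∈ F) :
    ∀ h : (Fin k → Fin n) → Fin n, h ∈ F := by
  obtain ⟨m, rfl⟩ : ∃ m, n = m + 1 := ⟨n - 1, by omega⟩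
  have hone : (⟨1, by omega⟩ : Fin (m + 1)) = 1 := Fin.ext (Nat.mod_eq_of_lt (by omega)).symm
  have : Nonempty (Fin k) := ⟨⟨0, hk⟩⟩
  have hF : IsPostSubalgebra F := ⟨hmax _ _, fun hf => hone ▸ hshift _ hf⟩
  simp [hF.eq_univ_of_proj_mem hproj]
end

section
/- Let G be an abelian lattice-ordered group (an abelian group with a lattice order in which addition is order-preserving in each argument) and let u ∈ G be a strong unit (u ≥ 0 and for every a ∈ G there is m ∈ ℕ with a ≤ m·u). On the interval [0, u] = { a ∈ G : 0 ≤ a ≤ u }, define a ⊕ b = (a + b) ⊓ u, ¬a = u − a, and a ⊗ b = (a + b − u) ⊔ 0. Then: (1) [0, u] is closed under these operations; (2) the axioms of MV-algebras hold on [0, u] with constant 0 and 1 = u, namely a ⊕ b = b ⊕ a, a ⊕ (b ⊕ c) = (a ⊕ b) ⊕ c, a ⊕ 0 = a, a ⊕ u = u, ¬¬a = a, ¬0 = u, ¬(¬a ⊕ b) ⊕ b = ¬(¬b ⊕ a) ⊕ a, and a ⊗ b = ¬(¬a ⊕ ¬b); and (3) the lattice order induced by the MV operations coincides with the order inherited from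 G: for all a, b ∈ [0, u], ¬(¬a ⊕ b) ⊕ b = a ⊔ b. -/
section aux
variable {G : Type*} [AddCommGroup G] [Lattice G]
    [CovariantClass G G (· + ·) (· ≤ ·)]

private lemma key_sup (u a b : G) (ha : a ∈ Set.Icc 0 u) (hb : b ∈ Set.Icc 0 u) :
    (u - ((u - a + b) ⊓ u) + b) ⊓ u = a ⊔ b := by
  have h1 : u - ((u - a + b) ⊓ u) = (a - b) ⊔ 0 := by
    rw [sub_inf, sub_self]
    congr 1
    abel
  rw [h1, sup_add, zero_add, sub_add_cancel]
  exact inf_eq_left.2 (sup_le ha.2 hb.2)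

end aux

/-- Chang–Mundici Γ construction. Let G be an abelian ℓ-group and u
a strong unit. On [0, u], with a ⊕ b = (a + b) ⊓ u, ¬a = u − a,
a ⊗ b = (a + b − u) ⊔ 0: (1) [0, u] is closed under the operations; (2) the
MV-algebra axioms hold with 0 and 1 = u; (3) the MV lattice order coincides with
the order inherited from G. -/
theorem stmt_7 {G : Type*} [AddCommGroup G] [Lattice G]
    [CovariantClass G G (· + ·) (· ≤ ·)]
    (u : G) (hu : 0 ≤ u) (hstrong : ∀ a : G, ∃ m : ℕ, a ≤ m • u) :
    -- (1) closure
    (∀ a b : G, a ∈ Set.Icc 0 u → b ∈ Set.Icc 0 u →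
      (a + b) ⊓ u ∈ Set.Icc 0 u ∧ u - a ∈ Set.Icc 0 u ∧
        (a + b - u) ⊔ 0 ∈ Set.Icc 0 u) ∧
    -- (2) the MV-algebra axioms
    (∀ a b c : G, a ∈ Set.Icc 0 u → b ∈ Set.Icc 0 u → c ∈ Set.Icc 0 u →
      ((a + b) ⊓ u = (b + a) ⊓ u) ∧
      ((a + ((b + c) ⊓ u)) ⊓ u = (((a + b) ⊓ u) + c) ⊓ u) ∧
      ((a + 0) ⊓ u = a) ∧
      ((a + u) ⊓ u = u) ∧
      (u - (u - a) = a) ∧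
      ((u - 0 : G) = u) ∧
      ((u - ((u - a + b) ⊓ u) + b) ⊓ u = (u - ((u - b + a) ⊓ u) + a) ⊓ u) ∧
      ((a + b - u) ⊔ 0 = u - ((u - a + (u - b)) ⊓ u))) ∧
    -- (3) the MV order is the order of G
    (∀ a b : G, a ∈ Set.Icc 0 u → b ∈ Set.Icc 0 u →
      (u - ((u - a + b) ⊓ u) + b) ⊓ u = a ⊔ b) := by
  refine ⟨?_, ?_, fun a b ha hb => key_sup u a b ha hb⟩
  · intro a b ha hb
    refine ⟨⟨le_inf (add_nonneg ha.1 hb.1) hu, inf_le_right⟩,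
      ⟨sub_nonneg.2 ha.2, sub_le_self _ ha.1⟩,
      ⟨le_sup_right, sup_le (sub_le_iff_le_add.2 (add_le_add ha.2 hb.2)) hu⟩⟩
  · intro a b c ha hb hc
    refine ⟨by rw [add_comm], ?_, by rw [add_zero]; exact inf_eq_left.2 ha.2,
      ?_, sub_sub_cancel u a, sub_zero u, ?_, ?_⟩
    · rw [add_inf, inf_add, inf_assoc, inf_assoc]
      congr 1
      · abel
      · rw [inf_eq_right.2 (le_add_of_nonneg_left ha.1),
          inf_eq_right.2 (le_add_of_nonneg_right hc.1)]
    · exact inf_eq_right.2 (le_add_of_nonneg_left ha.1)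
    · rw [key_sup u a b ha hb, key_sup u b a hb ha, sup_comm]
    · rw [sub_inf, sub_self]
      congr 1
      abel
end

section
/- Let n ≥ 1. Let F be the smallest set of functions from [0,1]^n to [0,1] that contains the n coordinate projections and is closed under the pointwise operations (f, g) ↦ min(f + g, 1) and f ↦ 1 − f. Then F is exactly the set of all McNaughton functions over [0,1]^n whose range is contained in [0,1] (McNaughton's theorem). -/
open scoped unitInterval

/-- Truncated addition on [0,1]: x ⊕ y = min(x + y, 1). -/
def truncAdd (x y : I) : I :=
  ⟨min ((x : ℝ) + (y : ℝ)) 1,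
    le_min (add_nonneg x.2.1 y.2.1) zero_le_one, min_le_right _ _⟩

/-- The smallest set of functions [0,1]^n → [0,1] containing the coordinate
projections and closed under pointwise (f, g) ↦ min(f + g, 1) and f ↦ 1 − f. -/
inductive LukGen (n : ℕ) : ((Fin n → I) → I) → Prop
  | proj (i : Fin n) : LukGen n (fun x => x i)
  | add {f g : (Fin n → I) → I} : LukGen n f → LukGen n g →
      LukGen n (fun x => truncAdd (f x) (g x))
  | neg {f : (Fin n → I) → I} : LukGen n f →
      LukGen n (fun x => unitInterval.symm (f x))

/-- f : [0,1]^n → ℝ is a McNaughton function: continuous and piecewise equal to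
finitely many affine polynomials with integer coefficients. -/
def IsMcNaughton (n : ℕ) (f : (Fin n → I) → ℝ) : Prop :=
  Continuous f ∧
    ∃ (k : ℕ) (a : Fin k → Fin n → ℤ) (b : Fin k → ℤ),
      ∀ x : Fin n → I, ∃ i : Fin k,
        f x = (∑ j : Fin n, (a i j : ℝ) * (x j : ℝ)) + (b i : ℝ)

noncomputable def clampI (r : ℝ) : I := Set.projIcc (0:ℝ) 1 zero_le_one r

lemma clampI_coe (r : ℝ) : (clampI r : ℝ) = max 0 (min 1 r) := rfl

lemma clampI_mono : Monotone clampI := Set.monotone_projIcc zero_le_one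

lemma clampI_of_mem (x : I) : clampI (x : ℝ) = x := by
  simp [clampI, Set.projIcc_of_mem zero_le_one x.2]

lemma clampI_coe_of_nonpos {r : ℝ} (h : r ≤ 0) : (clampI r : ℝ) = 0 := by
  rw [clampI_coe, min_eq_right (h.trans zero_le_one), max_eq_left h]

lemma clampI_coe_of_one_le {r : ℝ} (h : 1 ≤ r) : (clampI r : ℝ) = 1 := by
  rw [clampI_coe, min_eq_left h, max_eq_right zero_le_one]

lemma clampI_coe_of_mem {r : ℝ} (h0 : 0 ≤ r) (h1 : r ≤ 1) : (clampI r : ℝ) = r := by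
  rw [clampI_coe, min_eq_right h1, max_eq_right h0]

lemma truncAdd_coe (x y : I) : (truncAdd x y : ℝ) = min ((x:ℝ) + y) 1 := rfl

lemma core_identity (t : ℝ) (x : I) :
    clampI (t + x) =
      truncAdd (clampI t)
        (unitInterval.symm (truncAdd (unitInterval.symm x) (unitInterval.symm (clampI (t+1))))) := by
  have hx0 := x.2.1
  have hx1 := x.2.2
  apply Subtype.ext
  rw [truncAdd_coe, unitInterval.coe_symm_eq, truncAdd_coe, unitInterval.coe_symm_eq,
    unitInterval.coe_symm_eq]
  rcases le_or_gt t (-1) with h | h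
  · rw [clampI_coe_of_nonpos (by linarith : t + (x:ℝ) ≤ 0),
      clampI_coe_of_nonpos (by linarith : t ≤ 0),
      clampI_coe_of_nonpos (by linarith : t + 1 ≤ 0)]
    simp only [min_def]; split_ifs <;> linarith
  · rcases le_or_gt t 0 with h2 | h2
    · rw [clampI_coe_of_nonpos h2, clampI_coe_of_mem (r := t+1) (by linarith) (by linarith)]
      rcases le_or_gt (t + (x:ℝ)) 0 with h3 | h3
      · rw [clampI_coe_of_nonpos h3]
        simp only [min_def]; split_ifs <;> linarith
      · rw [clampI_coe_of_mem (by linarith) (by linarith)]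
        simp only [min_def]; split_ifs <;> linarith
    · rcases le_or_gt t 1 with h4 | h4
      · rw [clampI_coe_of_mem (r := t) (by linarith) (by linarith),
          clampI_coe_of_one_le (r := t+1) (by linarith : (1:ℝ) ≤ t + 1)]
        rcases le_or_gt (t + (x:ℝ)) 1 with h5 | h5
        · rw [clampI_coe_of_mem (r := t + (x:ℝ)) (by linarith) h5]
          simp only [min_def]; split_ifs <;> linarith
        · rw [clampI_coe_of_one_le (r := t + (x:ℝ)) (by linarith)]
          simp only [min_def]; split_ifs <;> linarith
      · rw [clampI_coe_of_one_le (by linarith : (1:ℝ) ≤ t + x),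
          clampI_coe_of_one_le (by linarith : (1:ℝ) ≤ t),
          clampI_coe_of_one_le (by linarith : (1:ℝ) ≤ t + 1)]
        simp only [min_def]; split_ifs <;> linarith

lemma luk_one {n : ℕ} (hn : 1 ≤ n) : LukGen n (fun _ => 1) := by
  have h := LukGen.add (LukGen.proj (n := n) ⟨0, hn⟩) (LukGen.neg (LukGen.proj ⟨0, hn⟩))
  convert h using 1
  funext x
  apply Subtype.ext
  rw [truncAdd_coe, unitInterval.coe_symm_eq]
  simp

lemma luk_zero {n : ℕ} (hn : 1 ≤ n) : LukGen n (fun _ => 0) := by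
  have h := LukGen.neg (luk_one hn)
  convert h using 1
  funext x
  apply Subtype.ext
  rw [unitInterval.coe_symm_eq]
  simp

lemma max_eq_luk (a b : I) : max a b = truncAdd (unitInterval.symm (truncAdd (unitInterval.symm a) b)) b := by
  have ha0 := a.2.1; have ha1 := a.2.2; have hb0 := b.2.1; have hb1 := b.2.2
  apply Subtype.ext
  rw [truncAdd_coe, unitInterval.coe_symm_eq, truncAdd_coe, unitInterval.coe_symm_eq]
  rcases le_total a b with h | h
  · have h' : (a:ℝ) ≤ b := h
    rw [max_eq_right h]
    simp only [min_def]; split_ifs <;> linarith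
  · have h' : (b:ℝ) ≤ a := h
    rw [max_eq_left h]
    simp only [min_def]; split_ifs <;> linarith

lemma luk_max {n : ℕ} {f g : (Fin n → I) → I} (hf : LukGen n f) (hg : LukGen n g) :
    LukGen n (fun x => max (f x) (g x)) := by
  have h := LukGen.add (LukGen.neg (LukGen.add (LukGen.neg hf) hg)) hg
  convert h using 1
  funext x
  exact max_eq_luk (f x) (g x)

lemma luk_min {n : ℕ} {f g : (Fin n → I) → I} (hf : LukGen n f) (hg : LukGen n g) :
    LukGen n (fun x => min (f x) (g x)) := by
  have h := LukGen.neg (luk_max (LukGen.neg hf) (LukGen.neg hg))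
  convert h using 1
  funext x
  show min (f x) (g x) = unitInterval.symm (max (unitInterval.symm (f x)) (unitInterval.symm (g x)))
  rcases le_total (f x) (g x) with h' | h'
  · rw [min_eq_left h', max_eq_left (unitInterval.symm_le_symm.mpr h'), unitInterval.symm_symm]
  · rw [min_eq_right h', max_eq_right (unitInterval.symm_le_symm.mpr h'), unitInterval.symm_symm]

lemma luk_clamp_const {n : ℕ} (hn : 1 ≤ n) (b : ℤ) :
    LukGen n (fun _ => clampI (b : ℝ)) := by
  rcases le_or_gt b 0 with h | h
  · have : (fun (_ : Fin n → I) => clampI (b:ℝ)) = fun _ => 0 := by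
      funext x
      apply Subtype.ext
      rw [clampI_coe_of_nonpos (by exact_mod_cast h)]
      rfl
    rw [this]; exact luk_zero hn
  · have hb : (1:ℝ) ≤ (b:ℝ) := by exact_mod_cast h
    have : (fun (_ : Fin n → I) => clampI (b:ℝ)) = fun _ => 1 := by
      funext x
      apply Subtype.ext
      rw [clampI_coe_of_one_le hb]
      rfl
    rw [this]; exact luk_one hn

lemma natAbs_sum_update {n : ℕ} (a : Fin n → ℤ) (j0 : Fin n) (v : ℤ) :
    (∑ j, (Function.update a j0 v j).natAbs) + (a j0).natAbs
      = (∑ j, (a j).natAbs) + v.natAbs := by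
  have h : ∀ j, (Function.update a j0 v j).natAbs
      = Function.update (fun j => (a j).natAbs) j0 v.natAbs j := by
    intro j
    by_cases hj : j = j0
    · subst hj; simp
    · simp [Function.update_of_ne hj]
  rw [Finset.sum_congr rfl (fun j _ => h j), Finset.sum_update_of_mem (Finset.mem_univ j0)]
  rw [show (Finset.univ : Finset (Fin n)) \ {j0} = Finset.univ.erase j0 by
    rw [Finset.sdiff_singleton_eq_erase]]
  rw [← Finset.add_sum_erase Finset.univ (fun j => (a j).natAbs) (Finset.mem_univ j0)]
  ring

lemma sum_update_real {n : ℕ} (a : Fin n → ℤ) (j0 : Fin n) (v : ℤ) (x : Fin n → I) :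
    (∑ j, ((Function.update a j0 v j : ℤ) : ℝ) * (x j : ℝ))
      = (∑ j, ((a j : ℤ) : ℝ) * (x j : ℝ)) + ((v : ℝ) - (a j0 : ℝ)) * (x j0 : ℝ) := by
  have h : ∀ j : Fin n, ((Function.update a j0 v j : ℤ) : ℝ) * (x j : ℝ)
      = ((a j : ℤ) : ℝ) * (x j : ℝ)
        + (if j = j0 then ((v : ℝ) - (a j0 : ℝ)) * (x j0 : ℝ) else 0) := by
    intro j
    by_cases hj : j = j0
    · subst hj; rw [Function.update_self]; simp; ring
    · rw [Function.update_of_ne hj]; simp [hj]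
  rw [Finset.sum_congr rfl (fun j _ => h j), Finset.sum_add_distrib,
    Finset.sum_ite_eq' Finset.univ j0]
  simp

lemma luk_clamp_affine {n : ℕ} (hn : 1 ≤ n) :
    ∀ (M : ℕ) (a : Fin n → ℤ) (b : ℤ), (∑ j, (a j).natAbs) ≤ M →
      LukGen n (fun x => clampI ((∑ j, ((a j : ℤ) : ℝ) * (x j : ℝ)) + (b : ℝ))) := by
  intro M
  induction M with
  | zero =>
    intro a b hM
    have hz : ∀ j, a j = 0 := by
      intro j
      have h3 : (a j).natAbs ≤ ∑ x, (a x).natAbs := by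
        simpa using Finset.single_le_sum (f := fun j => (a j).natAbs) (fun j _ => Nat.zero_le _)
          (Finset.mem_univ j)
      omega
    have : (fun x : Fin n → I => clampI ((∑ j, ((a j : ℤ) : ℝ) * (x j : ℝ)) + (b : ℝ)))
        = fun _ => clampI (b : ℝ) := by
      funext x
      congr 1
      rw [Finset.sum_eq_zero (fun j _ => by rw [hz j]; simp)]
      ring
    rw [this]
    exact luk_clamp_const hn b
  | succ M ih =>
    intro a b hM
    by_cases hall : ∀ j, a j = 0
    · have : (fun x : Fin n → I => clampI ((∑ j, ((a j : ℤ) : ℝ) * (x j : ℝ)) + (b : ℝ)))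
          = fun _ => clampI (b : ℝ) := by
        funext x
        congr 1
        rw [Finset.sum_eq_zero (fun j _ => by rw [hall j]; simp)]
        ring
      rw [this]
      exact luk_clamp_const hn b
    push_neg at hall
    obtain ⟨j0, hj0⟩ := hall
    rcases lt_or_gt_of_ne hj0 with hneg | hpos
    · -- a j0 < 0 : use a' = update a j0 (a j0 + 1), subtract x j0
      set a' := Function.update a j0 (a j0 + 1) with ha'
      have hcard : (∑ j, (a' j).natAbs) ≤ M := by
        rw [ha']
        have h1 := natAbs_sum_update a j0 (a j0 + 1)
        have h2 : (a j0 + 1).natAbs + 1 = (a j0).natAbs := by omega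
        omega
      have hrw : (fun x : Fin n → I => clampI ((∑ j, ((a j : ℤ) : ℝ) * (x j : ℝ)) + (b : ℝ)))
          = fun x => truncAdd
              ((fun x : Fin n → I => clampI ((∑ j, ((a' j : ℤ) : ℝ) * (x j : ℝ)) + ((b - 1 : ℤ) : ℝ))) x)
              (unitInterval.symm (truncAdd
                (unitInterval.symm (unitInterval.symm (x j0)))
                (unitInterval.symm ((fun x : Fin n → I => clampI ((∑ j, ((a' j : ℤ) : ℝ) * (x j : ℝ)) + ((b : ℤ) : ℝ))) x)))) := by
        funext x
        have hid := core_identity ((∑ j, ((a' j : ℤ) : ℝ) * (x j : ℝ)) + ((b - 1 : ℤ) : ℝ))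
          (unitInterval.symm (x j0))
        have he1 : (∑ j, ((a' j : ℤ) : ℝ) * (x j : ℝ)) + ((b - 1 : ℤ) : ℝ) + (unitInterval.symm (x j0) : ℝ)
            = (∑ j, ((a j : ℤ) : ℝ) * (x j : ℝ)) + (b : ℝ) := by
          rw [sum_update_real a j0 (a j0 + 1) x, unitInterval.coe_symm_eq]
          push_cast
          ring
        have he2 : (∑ j, ((a' j : ℤ) : ℝ) * (x j : ℝ)) + ((b - 1 : ℤ) : ℝ) + 1
            = (∑ j, ((a' j : ℤ) : ℝ) * (x j : ℝ)) + ((b : ℤ) : ℝ) := by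
          push_cast; ring
        rw [he1, he2] at hid
        exact hid
      rw [hrw]
      exact LukGen.add (ih a' (b - 1) hcard)
        (LukGen.neg (LukGen.add (LukGen.neg (LukGen.neg (LukGen.proj j0)))
          (LukGen.neg (ih a' b hcard))))
    · -- a j0 > 0 : use a' = update a j0 (a j0 - 1), add x j0
      set a' := Function.update a j0 (a j0 - 1) with ha'
      have hcard : (∑ j, (a' j).natAbs) ≤ M := by
        rw [ha']
        have h1 := natAbs_sum_update a j0 (a j0 - 1)
        have h2 : (a j0 - 1).natAbs + 1 = (a j0).natAbs := by omega
        omega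
      have hrw : (fun x : Fin n → I => clampI ((∑ j, ((a j : ℤ) : ℝ) * (x j : ℝ)) + (b : ℝ)))
          = fun x => truncAdd
              ((fun x : Fin n → I => clampI ((∑ j, ((a' j : ℤ) : ℝ) * (x j : ℝ)) + ((b : ℤ) : ℝ))) x)
              (unitInterval.symm (truncAdd
                (unitInterval.symm (x j0))
                (unitInterval.symm ((fun x : Fin n → I => clampI ((∑ j, ((a' j : ℤ) : ℝ) * (x j : ℝ)) + ((b + 1 : ℤ) : ℝ))) x)))) := by
        funext x
        have hid := core_identity ((∑ j, ((a' j : ℤ) : ℝ) * (x j : ℝ)) + ((b : ℤ) : ℝ)) (x j0)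
        have he1 : (∑ j, ((a' j : ℤ) : ℝ) * (x j : ℝ)) + ((b : ℤ) : ℝ) + ((x j0 : ℝ))
            = (∑ j, ((a j : ℤ) : ℝ) * (x j : ℝ)) + (b : ℝ) := by
          rw [sum_update_real a j0 (a j0 - 1) x]
          push_cast
          ring
        have he2 : (∑ j, ((a' j : ℤ) : ℝ) * (x j : ℝ)) + ((b : ℤ) : ℝ) + 1
            = (∑ j, ((a' j : ℤ) : ℝ) * (x j : ℝ)) + ((b + 1 : ℤ) : ℝ) := by
          push_cast; ring
        rw [he1, he2] at hid
        exact hid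
      rw [hrw]
      exact LukGen.add (ih a' b hcard)
        (LukGen.neg (LukGen.add (LukGen.neg (LukGen.proj j0))
          (LukGen.neg (ih a' (b + 1) hcard))))

noncomputable def Lline (c : ℝ × ℝ) (t : ℝ) : ℝ := (1 - t) * c.1 + t * c.2

lemma Lline_zero (c : ℝ × ℝ) : Lline c 0 = c.1 := by simp [Lline]
lemma Lline_one (c : ℝ × ℝ) : Lline c 1 = c.2 := by simp [Lline]

lemma continuous_Lline (c : ℝ × ℝ) : Continuous (Lline c) := by
  unfold Lline; fun_prop

/-- crossing point of two lines (junk if parallel) -/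
noncomputable def crossPt (c c' : ℝ × ℝ) : ℝ := (c.1 - c'.1) / ((c.1 - c'.1) - (c.2 - c'.2))

lemma eq_crossPt {c c' : ℝ × ℝ} (h : c ≠ c') {t : ℝ} (ht : Lline c t = Lline c' t) :
    t = crossPt c c' := by
  have key : (1 - t) * (c.1 - c'.1) + t * (c.2 - c'.2) = 0 := by
    unfold Lline at ht; linear_combination ht
  by_cases hden : (c.1 - c'.1) - (c.2 - c'.2) = 0
  · exfalso
    have h1 : c.1 - c'.1 = 0 := by linear_combination key + t * hden
    have h2 : c.2 - c'.2 = 0 := by linarith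
    exact h (Prod.ext (by linarith) (by linarith))
  · rw [crossPt]
    field_simp
    linear_combination -key

/-- Two disjoint closed sets covering a preconnected set: it lies in one. -/
lemma preconn_two {J F1 F2 : Set ℝ} (hJ : IsPreconnected J) (h1 : IsClosed F1)
    (h2 : IsClosed F2) (hcov : J ⊆ F1 ∪ F2) (hdisj : J ∩ F1 ∩ F2 = ∅) :
    J ⊆ F1 ∨ J ⊆ F2 := by
  by_contra hcon
  push_neg at hcon
  obtain ⟨hn1, hn2⟩ := hcon
  obtain ⟨t1, ht1J, ht1⟩ := Set.not_subset.mp hn1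
  obtain ⟨t2, ht2J, ht2⟩ := Set.not_subset.mp hn2
  have hne := hJ F2ᶜ F1ᶜ h2.isOpen_compl h1.isOpen_compl
    (fun t htJ => by
      by_cases hF1 : t ∈ F1
      · by_cases hF2 : t ∈ F2
        · exact absurd (⟨⟨htJ, hF1⟩, hF2⟩ : t ∈ J ∩ F1 ∩ F2)
            (Set.eq_empty_iff_forall_notMem.mp hdisj t)
        · exact Or.inl hF2
      · exact Or.inr hF1)
    ⟨t2, ht2J, ht2⟩ ⟨t1, ht1J, ht1⟩
  obtain ⟨t, htJ, htF2, htF1⟩ := hne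
  rcases hcov htJ with h | h
  · exact htF1 h
  · exact htF2 h

/-- Preconnected nonempty set covered by finitely many closed sets, pairwise
disjoint on it, lies in one of them. -/
lemma connected_pick {α : Type*} [DecidableEq α] (S : Finset α) :
    ∀ (J : Set ℝ), IsPreconnected J → J.Nonempty →
    ∀ (A : α → Set ℝ), (∀ c, IsClosed (A c)) →
    (∀ c ∈ S, ∀ c' ∈ S, c ≠ c' → J ∩ A c ∩ A c' = ∅) →
    (J ⊆ ⋃ c ∈ S, A c) → ∃ c ∈ S, J ⊆ A c := by
  induction S using Finset.induction with
  | empty => intro J hJ hne A _ _ hcov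
             obtain ⟨t, ht⟩ := hne
             simpa using hcov ht
  | @insert a S ha ih =>
    intro J hJ hne A hcl hdisj hcov
    have hBcl : IsClosed (⋃ c ∈ S, A c) :=
      Set.Finite.isClosed_biUnion S.finite_toSet (fun c _ => hcl c)
    have hcov2 : J ⊆ A a ∪ ⋃ c ∈ S, A c := by
      intro t ht
      rcases Set.mem_iUnion₂.mp (hcov ht) with ⟨c, hc, htc⟩
      rcases Finset.mem_insert.mp hc with rfl | hcS
      · exact Or.inl htc
      · exact Or.inr (Set.mem_iUnion₂.mpr ⟨c, hcS, htc⟩)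
    have hdisj2 : J ∩ A a ∩ (⋃ c ∈ S, A c) = ∅ := by
      ext t
      simp only [Set.mem_inter_iff, Set.mem_iUnion, Set.mem_empty_iff_false, iff_false]
      rintro ⟨⟨htJ, hta⟩, c, hcS, htc⟩
      have hac : a ≠ c := fun h => ha (h ▸ hcS)
      have := hdisj a (Finset.mem_insert_self a S) c (Finset.mem_insert_of_mem hcS) hac
      exact absurd (this ▸ Set.mem_inter (Set.mem_inter htJ hta) htc) (Set.notMem_empty t)
    rcases preconn_two hJ (hcl a) hBcl hcov2 hdisj2 with h | h
    · exact ⟨a, Finset.mem_insert_self a S, h⟩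
    · obtain ⟨c, hcS, hc⟩ := ih J hJ hne A hcl
        (fun c hc c' hc' hne' => hdisj c (Finset.mem_insert_of_mem hc) c' (Finset.mem_insert_of_mem hc') hne') h
      exact ⟨c, Finset.mem_insert_of_mem hcS, hc⟩

/-- Local selection: to the right of any s ∈ [0,1), g coincides with a single line
on a small closed interval. -/
lemma lemA (P : Finset (ℝ × ℝ)) (g : ℝ → ℝ) (hg : Continuous g)
    (hpw : ∀ t ∈ Set.Icc (0:ℝ) 1, ∃ c ∈ P, g t = Lline c t)
    (s : ℝ) (hs : s ∈ Set.Ico (0:ℝ) 1) :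
    ∃ c ∈ P, ∃ δ > 0, s + δ ≤ 1 ∧ ∀ t ∈ Set.Icc s (s + δ), g t = Lline c t := by
  classical
  set X : Finset ℝ := (P ×ˢ P).image (fun q => crossPt q.1 q.2) with hX
  set M : Finset ℝ := insert 1 (X.filter (fun u => s < u)) with hM
  have hMne : M.Nonempty := ⟨1, Finset.mem_insert_self 1 _⟩
  set m : ℝ := M.min' hMne with hm
  have hm1 : m ≤ 1 := Finset.min'_le M 1 (Finset.mem_insert_self 1 _)
  have hsm : s < m := by
    have := Finset.min'_mem M hMne
    rw [← hm] at this
    rcases Finset.mem_insert.mp this with h | h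
    · rw [h]; exact hs.2
    · exact (Finset.mem_filter.mp h).2
  set δ : ℝ := (m - s) / 2 with hδ
  have hδpos : 0 < δ := by rw [hδ]; linarith
  have hsδ1 : s + δ ≤ 1 := by rw [hδ]; linarith
  have hsδm : s + δ < m := by rw [hδ]; linarith
  -- no crossing points in Ioc s (s+δ)
  have hnocross : ∀ u ∈ X, u ∉ Set.Ioc s (s + δ) := by
    intro u hu hmem
    have : u ∈ M := by
      rw [hM]; exact Finset.mem_insert_of_mem (Finset.mem_filter.mpr ⟨hu, hmem.1⟩)
    have := Finset.min'_le M u this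
    rw [← hm] at this
    linarith [hmem.2]
  set J : Set ℝ := Set.Ioc s (s + δ) with hJ
  have hJne : J.Nonempty := Set.nonempty_Ioc.mpr (by linarith)
  have hJpre : IsPreconnected J := isPreconnected_Ioc
  set A : ℝ × ℝ → Set ℝ := fun c => {t | g t = Lline c t} with hA
  have hAcl : ∀ c, IsClosed (A c) := fun c => isClosed_eq hg (continuous_Lline c)
  have hdisj : ∀ c ∈ P, ∀ c' ∈ P, c ≠ c' → J ∩ A c ∩ A c' = ∅ := by
    intro c hc c' hc' hne
    ext t
    simp only [Set.mem_inter_iff, Set.mem_empty_iff_false, iff_false]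
    rintro ⟨⟨htJ, htc⟩, htc'⟩
    have : Lline c t = Lline c' t := by rw [← htc, ← htc']
    have ht := eq_crossPt hne this
    have : t ∈ X := by
      rw [hX]; exact Finset.mem_image.mpr ⟨(c, c'), Finset.mem_product.mpr ⟨hc, hc'⟩, ht.symm⟩
    exact hnocross t this htJ
  have hcov : J ⊆ ⋃ c ∈ P, A c := by
    intro t htJ
    have htI : t ∈ Set.Icc (0:ℝ) 1 := ⟨le_trans hs.1 (le_of_lt htJ.1), le_trans htJ.2 hsδ1⟩
    obtain ⟨c, hc, hgc⟩ := hpw t htI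
    exact Set.mem_iUnion₂.mpr ⟨c, hc, hgc⟩
  obtain ⟨c, hcP, hcJ⟩ := connected_pick P J hJpre hJne A hAcl hdisj hcov
  refine ⟨c, hcP, δ, hδpos, hsδ1, ?_⟩
  have hclosure : Set.Icc s (s + δ) ⊆ A c := by
    have h1 : closure J ⊆ A c := closure_minimal hcJ (hAcl c)
    rw [hJ, closure_Ioc (by linarith : s ≠ s + δ)] at h1
    exact h1
  exact fun t ht => hclosure ht

/-- Main 1-D lemma: chain argument. -/
lemma lem1d_aux (P : Finset (ℝ × ℝ)) (g : ℝ → ℝ) (hg : Continuous g)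
    (hpw : ∀ t ∈ Set.Icc (0:ℝ) 1, ∃ c ∈ P, g t = Lline c t) :
    ∀ (m : ℕ) (E : Finset (ℝ × ℝ)) (c : ℝ × ℝ) (s : ℝ),
      (P \ E).card ≤ m → c ∈ P → c ∉ E → s ∈ Set.Icc (0:ℝ) 1 →
      g s = Lline c s → g 0 ≤ c.1 →
      (∀ e ∈ E, ∀ t ∈ Set.Ioc s 1, g t < Lline e t) →
      ∃ c' ∈ P, g 0 ≤ c'.1 ∧ c'.2 ≤ g 1 := by
  classical
  intro m
  induction m with
  | zero =>
    intro E c s hcard hcP hcE _ _ _ _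
    exfalso
    have : c ∈ P \ E := Finset.mem_sdiff.mpr ⟨hcP, hcE⟩
    have := Finset.card_pos.mpr ⟨c, this⟩
    omega
  | succ m ih =>
    intro E c s hcard hcP hcE hsI hgs hg0 hE
    by_cases hc2 : c.2 ≤ g 1
    · exact ⟨c, hcP, hg0, hc2⟩
    push_neg at hc2
    -- s' := greatest point of agreement with line c on [s,1]
    set T : Set ℝ := Set.Icc s 1 ∩ {t | g t = Lline c t} with hT
    have hTcpt : IsCompact T := isCompact_Icc.inter_right (isClosed_eq hg (continuous_Lline c))
    have hTne : T.Nonempty := ⟨s, ⟨⟨le_refl s, hsI.2⟩, hgs⟩⟩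
    obtain ⟨s', hs'great⟩ := hTcpt.exists_isGreatest hTne
    obtain ⟨⟨⟨hss', hs'1⟩, hgs'⟩, hs'ub⟩ := hs'great
    simp only [Set.mem_setOf_eq] at hgs'
    have hs'0 : 0 ≤ s' := le_trans hsI.1 hss'
    have hs'lt1 : s' < 1 := by
      rcases lt_or_eq_of_le hs'1 with h | h
      · exact h
      · exfalso
        rw [h] at hgs'
        rw [Lline_one] at hgs'
        linarith
    -- g is strictly below line c on (s',1]
    have habove : ∀ t ∈ Set.Ioc s' 1, g t < Lline c t := by
      intro t ht
      rcases lt_trichotomy (g t) (Lline c t) with h | h | h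
      · exact h
      · exfalso
        have : t ∈ T := ⟨⟨le_trans hss' (le_of_lt ht.1), ht.2⟩, h⟩
        exact absurd (hs'ub this) (not_le.mpr ht.1)
      · exfalso
        -- IVT on [t,1]
        have hcont : ContinuousOn (fun u => g u - Lline c u) (Set.Icc t 1) :=
          (hg.sub (continuous_Lline c)).continuousOn
        have hivt := intermediate_value_Icc' ht.2 hcont
        have h1 : (fun u => g u - Lline c u) 1 = g 1 - c.2 := by simp [Lline_one]
        have hmem : (0:ℝ) ∈ Set.Icc ((fun u => g u - Lline c u) 1) ((fun u => g u - Lline c u) t) := by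
          simp only [h1]
          constructor
          · linarith
          · show (0:ℝ) ≤ g t - Lline c t; linarith
        obtain ⟨u, huI, hu⟩ := hivt hmem
        have hu' : g u = Lline c u := by
          have : g u - Lline c u = 0 := hu
          linarith
        have : u ∈ T := ⟨⟨le_trans hss' (le_trans (le_of_lt ht.1) huI.1), huI.2⟩, hu'⟩
        have := hs'ub this
        have : s' < u := lt_of_lt_of_le ht.1 huI.1
        linarith
    -- pick next piece just right of s'
    obtain ⟨c', hc'P, δ, hδpos, hs'δ1, heq⟩ := lemA P g hg hpw s' ⟨hs'0, hs'lt1⟩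
    set t1 : ℝ := s' + δ with ht1def
    have hgt1 : g t1 = Lline c' t1 := heq t1 ⟨by linarith, le_refl t1⟩
    have ht1mem : t1 ∈ Set.Ioc s' 1 := ⟨by linarith, hs'δ1⟩
    have hlt : Lline c' t1 < Lline c t1 := hgt1 ▸ habove t1 ht1mem
    have hgs'c' : g s' = Lline c' s' := heq s' ⟨le_refl s', by linarith⟩
    have hs'eq : Lline c' s' = Lline c s' := by rw [← hgs'c', hgs']
    have hc'c : c' ≠ c := by
      intro h; rw [h] at hlt; exact lt_irrefl _ hlt
    -- affine comparison: β > 0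
    set β : ℝ := (c.2 - c'.2) - (c.1 - c'.1) with hβ
    have hD : ∀ t : ℝ, Lline c t - Lline c' t = β * (t - s') := by
      intro t
      have h0 : Lline c s' - Lline c' s' = 0 := by rw [hs'eq]; ring
      unfold Lline at h0 ⊢
      rw [hβ]
      linear_combination h0
    have hβpos : 0 < β := by
      have := hD t1
      nlinarith [hlt]
    have hc'1 : g 0 ≤ c'.1 := by
      have := hD 0
      rw [Lline_zero, Lline_zero] at this
      nlinarith
    -- recurse
    have hcard' : (P \ insert c E).card ≤ m := by
      have hsub : P \ insert c E ⊂ P \ E := by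
        apply Finset.ssubset_iff_of_subset (Finset.sdiff_subset_sdiff (le_refl P) (Finset.subset_insert c E)) |>.mpr
        exact ⟨c, Finset.mem_sdiff.mpr ⟨hcP, hcE⟩, fun h => (Finset.mem_sdiff.mp h).2 (Finset.mem_insert_self c E)⟩
      have := Finset.card_lt_card hsub
      omega
    have hc'E' : c' ∉ insert c E := by
      intro h
      rcases Finset.mem_insert.mp h with h | h
      · exact hc'c h
      · have := hE c' h t1 ⟨lt_of_le_of_lt hss' ht1mem.1, ht1mem.2⟩
        rw [hgt1] at this
        exact lt_irrefl _ this
    apply ih (insert c E) c' s' hcard' hc'P hc'E' ⟨hs'0, hs'1⟩ hgs'c' hc'1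
    intro e he t ht
    rcases Finset.mem_insert.mp he with rfl | heE
    · exact habove t ht
    · exact hE e heE t ⟨lt_of_le_of_lt hss' ht.1, ht.2⟩

/-- 1-D conclusion. -/
lemma lem1d (P : Finset (ℝ × ℝ)) (g : ℝ → ℝ) (hg : Continuous g)
    (hpw : ∀ t ∈ Set.Icc (0:ℝ) 1, ∃ c ∈ P, g t = Lline c t) :
    ∃ c ∈ P, g 0 ≤ c.1 ∧ c.2 ≤ g 1 := by
  obtain ⟨c0, hc0P, hgc0⟩ := hpw 0 ⟨le_refl 0, zero_le_one⟩
  rw [Lline_zero] at hgc0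
  exact lem1d_aux P g hg hpw P.card ∅ c0 0 (by simp) hc0P (Finset.notMem_empty c0)
    ⟨le_refl 0, zero_le_one⟩ (by rw [Lline_zero]; exact hgc0) (le_of_eq hgc0)
    (fun e he => absurd he (Finset.notMem_empty e))

lemma luk_finset_sup {n : ℕ} (hn : 1 ≤ n) {ι : Type*} (S : Finset ι)
    (F : ι → (Fin n → I) → I) (h : ∀ i ∈ S, LukGen n (F i)) :
    LukGen n (fun x => S.sup (fun i => F i x)) := by
  induction S using Finset.cons_induction with
  | empty =>
    have he : (fun x : Fin n → I => (∅ : Finset ι).sup (fun i => F i x)) = fun _ => (0:I) := by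
      funext x; rw [Finset.sup_empty]; rfl
    rw [he]; exact luk_zero hn
  | cons a s ha ih =>
    have hc : (fun x : Fin n → I => (Finset.cons a s ha).sup (fun i => F i x))
        = fun x => max (F a x) (s.sup (fun i => F i x)) := by
      funext x; rw [Finset.sup_cons]
    rw [hc]
    exact luk_max (h a (Finset.mem_cons_self a s)) (ih (fun i hi => h i (Finset.mem_cons_of_mem hi)))

lemma luk_finset_inf {n : ℕ} (hn : 1 ≤ n) {ι : Type*} (S : Finset ι)
    (F : ι → (Fin n → I) → I) (h : ∀ i ∈ S, LukGen n (F i)) :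
    LukGen n (fun x => S.inf (fun i => F i x)) := by
  induction S using Finset.cons_induction with
  | empty =>
    have he : (fun x : Fin n → I => (∅ : Finset ι).inf (fun i => F i x)) = fun _ => (1:I) := by
      funext x; rw [Finset.inf_empty]; rfl
    rw [he]; exact luk_one hn
  | cons a s ha ih =>
    have hc : (fun x : Fin n → I => (Finset.cons a s ha).inf (fun i => F i x))
        = fun x => min (F a x) (s.inf (fun i => F i x)) := by
      funext x; rw [Finset.inf_cons]
    rw [hc]
    exact luk_min (h a (Finset.mem_cons_self a s)) (ih (fun i hi => h i (Finset.mem_cons_of_mem hi)))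

/-- convert a Finset of affine pieces into the Fin-indexed form -/
lemma pieces_to_fin {n : ℕ} {f : (Fin n → I) → ℝ}
    (s : Finset ((Fin n → ℤ) × ℤ))
    (hcov : ∀ x : Fin n → I, ∃ p ∈ s, f x = (∑ j, (p.1 j : ℝ) * (x j : ℝ)) + (p.2 : ℝ)) :
    ∃ (k : ℕ) (a : Fin k → Fin n → ℤ) (b : Fin k → ℤ),
      ∀ x : Fin n → I, ∃ i : Fin k,
        f x = (∑ j : Fin n, (a i j : ℝ) * (x j : ℝ)) + (b i : ℝ) := by
  refine ⟨s.card, fun i => ((s.equivFin.symm i) : { x // x ∈ s }).1.1,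
    fun i => ((s.equivFin.symm i) : { x // x ∈ s }).1.2, fun x => ?_⟩
  obtain ⟨p, hp, hval⟩ := hcov x
  refine ⟨s.equivFin ⟨p, hp⟩, ?_⟩
  simp only [Equiv.symm_apply_apply]
  exact hval

lemma luk_isMcNaughton {n : ℕ} {f : (Fin n → I) → I} (h : LukGen n f) :
    IsMcNaughton n (fun x => (f x : ℝ)) := by
  classical
  induction h with
  | proj i =>
    constructor
    · exact continuous_subtype_val.comp (continuous_apply i)
    · refine ⟨1, fun _ => (Pi.single i 1 : Fin n → ℤ), fun _ => 0, fun x => ⟨0, ?_⟩⟩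
      have hterm : ∀ j : Fin n, (((Pi.single i 1 : Fin n → ℤ) j : ℤ) : ℝ) * (x j : ℝ)
          = if j = i then (x i : ℝ) else 0 := by
        intro j
        by_cases hj : j = i
        · subst hj; simp
        · simp [Pi.single_apply, hj]
      rw [Finset.sum_congr rfl (fun j _ => hterm j), Finset.sum_ite_eq' Finset.univ i]
      simp
  | add hf hg ihf ihg =>
    rename_i f' g'
    obtain ⟨hcf, kf, af, bf, hfc⟩ := ihf
    obtain ⟨hcg, kg, ag, bg, hgc⟩ := ihg
    have hfc' : ∀ x : Fin n → I, ∃ i, ((f' x : I) : ℝ)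
        = (∑ j : Fin n, (af i j : ℝ) * (x j : ℝ)) + (bf i : ℝ) := hfc
    have hgc' : ∀ x : Fin n → I, ∃ i, ((g' x : I) : ℝ)
        = (∑ j : Fin n, (ag i j : ℝ) * (x j : ℝ)) + (bg i : ℝ) := hgc
    constructor
    · show Continuous fun x => ((truncAdd (f' x) (g' x) : I) : ℝ)
      have : (fun x => ((truncAdd (f' x) (g' x) : I) : ℝ))
          = fun x => min ((f' x : ℝ) + (g' x : ℝ)) 1 := rfl
      rw [this]
      exact (hcf.add hcg).min continuous_const
    · apply pieces_to_fin
        (((Finset.univ ×ˢ Finset.univ : Finset (Fin kf × Fin kg)).image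
          (fun ij => (af ij.1 + ag ij.2, bf ij.1 + bg ij.2))) ∪ {((0 : Fin n → ℤ), (1:ℤ))})
      intro x
      obtain ⟨i, hi⟩ := hfc' x
      obtain ⟨j, hj⟩ := hgc' x
      rcases le_or_gt ((f' x : ℝ) + (g' x : ℝ)) 1 with hle | hlt
      · refine ⟨(af i + ag j, bf i + bg j), ?_, ?_⟩
        · exact Finset.mem_union_left _ (Finset.mem_image.mpr
            ⟨(i, j), Finset.mem_product.mpr ⟨Finset.mem_univ i, Finset.mem_univ j⟩, rfl⟩)
        · show min ((f' x : ℝ) + (g' x : ℝ)) 1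
              = (∑ j' : Fin n, (((af i + ag j) j' : ℤ) : ℝ) * (x j' : ℝ)) + ((bf i + bg j : ℤ) : ℝ)
          rw [min_eq_left hle, hi, hj]
          have hterm : ∀ j' : Fin n, (((af i + ag j) j' : ℤ) : ℝ) * (x j' : ℝ)
              = (af i j' : ℝ) * (x j' : ℝ) + (ag j j' : ℝ) * (x j' : ℝ) := by
            intro j'
            show ((af i j' + ag j j' : ℤ) : ℝ) * (x j' : ℝ) = _
            push_cast
            ring
          rw [Finset.sum_congr rfl fun j' _ => hterm j', Finset.sum_add_distrib]
          push_cast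
          ring
      · refine ⟨((0 : Fin n → ℤ), (1:ℤ)), Finset.mem_union_right _ (Finset.mem_singleton_self _), ?_⟩
        show min ((f' x : ℝ) + (g' x : ℝ)) 1 = _
        rw [min_eq_right (le_of_lt hlt)]
        simp
  | neg hf ihf =>
    rename_i f'
    obtain ⟨hcf, kf, af, bf, hfc⟩ := ihf
    have hfc' : ∀ x : Fin n → I, ∃ i, ((f' x : I) : ℝ)
        = (∑ j : Fin n, (af i j : ℝ) * (x j : ℝ)) + (bf i : ℝ) := hfc
    constructor
    · show Continuous fun x => ((unitInterval.symm (f' x) : I) : ℝ)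
      have : (fun x => ((unitInterval.symm (f' x) : I) : ℝ)) = fun x => 1 - (f' x : ℝ) := by
        funext x; exact unitInterval.coe_symm_eq (f' x)
      rw [this]
      exact continuous_const.sub hcf
    · apply pieces_to_fin ((Finset.univ : Finset (Fin kf)).image (fun i => (-af i, 1 - bf i)))
      intro x
      obtain ⟨i, hi⟩ := hfc' x
      refine ⟨(-af i, 1 - bf i), Finset.mem_image.mpr ⟨i, Finset.mem_univ i, rfl⟩, ?_⟩
      show ((unitInterval.symm (f' x) : I) : ℝ)
          = (∑ j : Fin n, (((-af i) j : ℤ) : ℝ) * (x j : ℝ)) + ((1 - bf i : ℤ) : ℝ)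
      rw [unitInterval.coe_symm_eq, hi]
      have hterm : ∀ j : Fin n, (((-af i) j : ℤ) : ℝ) * (x j : ℝ)
          = -((af i j : ℝ) * (x j : ℝ)) := by
        intro j
        show ((-(af i j) : ℤ) : ℝ) * (x j : ℝ) = _
        push_cast
        ring
      rw [Finset.sum_congr rfl fun j _ => hterm j, Finset.sum_neg_distrib]
      push_cast
      ring

lemma key_lemma {n : ℕ} {f : (Fin n → I) → I} (hcont : Continuous fun x => (f x : ℝ))
    {k : ℕ} (a : Fin k → Fin n → ℤ) (b : Fin k → ℤ)
    (hcov : ∀ x : Fin n → I, ∃ i : Fin k,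
      ((f x : I) : ℝ) = (∑ j : Fin n, (a i j : ℝ) * (x j : ℝ)) + (b i : ℝ))
    (x y : Fin n → I) :
    ∃ i : Fin k,
      ((f x : I) : ℝ) ≤ (∑ j : Fin n, (a i j : ℝ) * (x j : ℝ)) + (b i : ℝ) ∧
      (∑ j : Fin n, (a i j : ℝ) * (y j : ℝ)) + (b i : ℝ) ≤ ((f y : I) : ℝ) := by
  classical
  -- segment from x to y inside the cube
  have hmem : ∀ (t : I) (j : Fin n),
      (1 - (t:ℝ)) * (x j : ℝ) + (t:ℝ) * (y j : ℝ) ∈ Set.Icc (0:ℝ) 1 := by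
    intro t j
    have h1 : (0:ℝ) ≤ 1 - (t:ℝ) := by linarith [t.2.2]
    constructor
    · exact add_nonneg (mul_nonneg h1 (x j).2.1) (mul_nonneg t.2.1 (y j).2.1)
    · nlinarith [mul_nonneg h1 (sub_nonneg.mpr (x j).2.2),
        mul_nonneg t.2.1 (sub_nonneg.mpr (y j).2.2)]
  set z : I → (Fin n → I) := fun t j => ⟨(1 - (t:ℝ)) * (x j : ℝ) + (t:ℝ) * (y j : ℝ), hmem t j⟩
    with hzdef
  have hz : Continuous z := by
    apply continuous_pi
    intro j
    apply Continuous.subtype_mk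
    fun_prop
  set g : ℝ → ℝ := fun t => ((f (z (Set.projIcc 0 1 zero_le_one t)) : I) : ℝ) with hgdef
  have hgcont : Continuous g := hcont.comp (hz.comp continuous_projIcc)
  set p : Fin k → (Fin n → I) → ℝ :=
    fun i w => (∑ j : Fin n, (a i j : ℝ) * (w j : ℝ)) + (b i : ℝ) with hpdef
  set P : Finset (ℝ × ℝ) := Finset.univ.image (fun i : Fin k => (p i x, p i y)) with hPdef
  have hline : ∀ (i : Fin k) (t : I), p i (z t) = Lline (p i x, p i y) (t : ℝ) := by
    intro i t
    rw [hpdef]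
    simp only []
    rw [Lline]
    simp only []
    have hterm : ∀ j : Fin n, (a i j : ℝ) * ((z t j : I) : ℝ)
        = (1 - (t:ℝ)) * ((a i j : ℝ) * (x j : ℝ)) + (t:ℝ) * ((a i j : ℝ) * (y j : ℝ)) := by
      intro j
      show (a i j : ℝ) * ((1 - (t:ℝ)) * (x j : ℝ) + (t:ℝ) * (y j : ℝ)) = _
      ring
    rw [Finset.sum_congr rfl fun j _ => hterm j, Finset.sum_add_distrib,
      ← Finset.mul_sum, ← Finset.mul_sum]
    ring
  have hpw : ∀ t ∈ Set.Icc (0:ℝ) 1, ∃ c ∈ P, g t = Lline c t := by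
    intro t ht
    obtain ⟨i, hi⟩ := hcov (z (Set.projIcc 0 1 zero_le_one t))
    refine ⟨(p i x, p i y), Finset.mem_image.mpr ⟨i, Finset.mem_univ i, rfl⟩, ?_⟩
    rw [hgdef]
    simp only []
    rw [hi]
    have : (∑ j : Fin n, (a i j : ℝ) * ((z (Set.projIcc 0 1 zero_le_one t) j : I) : ℝ)) + (b i : ℝ)
        = p i (z (Set.projIcc 0 1 zero_le_one t)) := rfl
    rw [this, hline i, Set.projIcc_of_mem zero_le_one ht]
  obtain ⟨c, hcP, hc0, hc1⟩ := lem1d P g hgcont hpw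
  obtain ⟨i, _, hci⟩ := Finset.mem_image.mp hcP
  have hz0 : z (Set.projIcc 0 1 zero_le_one 0) = x := by
    rw [Set.projIcc_of_mem zero_le_one (Set.mem_Icc.mpr ⟨le_refl 0, zero_le_one⟩)]
    funext j
    apply Subtype.ext
    show (1 - ((⟨0, _⟩ : I) : ℝ)) * (x j : ℝ) + ((⟨0, _⟩ : I) : ℝ) * (y j : ℝ) = (x j : ℝ)
    norm_num
  have hz1 : z (Set.projIcc 0 1 zero_le_one 1) = y := by
    rw [Set.projIcc_of_mem zero_le_one (Set.mem_Icc.mpr ⟨zero_le_one, le_refl 1⟩)]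
    funext j
    apply Subtype.ext
    show (1 - ((⟨1, _⟩ : I) : ℝ)) * (x j : ℝ) + ((⟨1, _⟩ : I) : ℝ) * (y j : ℝ) = (y j : ℝ)
    norm_num
  have hg0 : g 0 = ((f x : I) : ℝ) := by rw [hgdef]; simp only []; rw [hz0]
  have hg1 : g 1 = ((f y : I) : ℝ) := by rw [hgdef]; simp only []; rw [hz1]
  refine ⟨i, ?_, ?_⟩
  · have : ((f x : I) : ℝ) ≤ c.1 := by rw [← hg0]; exact hc0
    rw [← hci] at this
    exact this
  · have : c.2 ≤ ((f y : I) : ℝ) := by rw [← hg1]; exact hc1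
    rw [← hci] at this
    exact this


/-- McNaughton's theorem: the smallest set of functions
[0,1]^n → [0,1] containing the projections and closed under pointwise
(f, g) ↦ min(f + g, 1) and f ↦ 1 − f is exactly the set of McNaughton functions
with range in [0,1]. -/
theorem stmt_8 (n : ℕ) (hn : 1 ≤ n) (f : (Fin n → I) → I) :
    LukGen n f ↔ IsMcNaughton n (fun x => (f x : ℝ)) := by
  constructor
  · exact luk_isMcNaughton
  · rintro ⟨hcont, k, a, b, hcov⟩
    classical
    have hcov' : ∀ x : Fin n → I, ∃ i : Fin k,
        ((f x : I) : ℝ) = (∑ j : Fin n, (a i j : ℝ) * (x j : ℝ)) + (b i : ℝ) := hcov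
    have hkey := fun x y => key_lemma hcont a b hcov' x y
    set p : Fin k → (Fin n → I) → ℝ :=
      fun i w => (∑ j : Fin n, (a i j : ℝ) * (w j : ℝ)) + (b i : ℝ) with hpdef
    set G : (Fin n → I) → Finset (Fin k) :=
      fun x => Finset.univ.filter (fun i => ((f x : I) : ℝ) ≤ p i x) with hGdef
    set A : Finset (Finset (Fin k)) := (Set.toFinite (Set.range G)).toFinset with hAdef
    have hFluk : LukGen n (fun w => A.sup (fun S => S.inf (fun i => clampI (p i w)))) := by
      apply luk_finset_sup hn A (fun S w => S.inf (fun i => clampI (p i w)))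
      intro S _
      apply luk_finset_inf hn S (fun i w => clampI (p i w))
      intro i _
      exact luk_clamp_affine hn (∑ j, (a i j).natAbs) (a i) (b i) le_rfl
    have hFf : (fun w => A.sup (fun S => S.inf (fun i => clampI (p i w)))) = f := by
      funext w
      apply le_antisymm
      · apply Finset.sup_le
        intro S hS
        rw [hAdef, Set.Finite.mem_toFinset] at hS
        obtain ⟨x, hx⟩ := hS
        obtain ⟨i, hix, hiy⟩ := hkey x w
        have hiS : i ∈ S := by
          rw [← hx, hGdef]
          exact Finset.mem_filter.mpr ⟨Finset.mem_univ i, hix⟩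
        refine le_trans (Finset.inf_le hiS) ?_
        rw [← clampI_of_mem (f w)]
        exact clampI_mono hiy
      · have hw : G w ∈ A := by
          rw [hAdef, Set.Finite.mem_toFinset]
          exact ⟨w, rfl⟩
        refine le_trans ?_ (Finset.le_sup hw)
        apply Finset.le_inf
        intro i hi
        rw [hGdef] at hi
        have hi2 := (Finset.mem_filter.mp hi).2
        rw [← clampI_of_mem (f w)]
        exact clampI_mono hi2
    rw [← hFf]
    exact hFluk
end

section
/- Let n ≥ 1 and let f be a McNaughton homeomorphism of [0,1]^n. Then f preserves Lebesgue measure: for every Lebesgue-measurable subset U of [0,1]^n, the image f(U) is Lebesgue measurable and μ(f(U)) = μ(U), where μ denotes n-dimensional Lebesgue measure. -/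
/-
Cut the unit cube into the pieces on which f agrees with an integer affine map x ↦ M x + c,
one piece for each of the countably many such maps. Two distinct affine maps agree only on a
proper affine subspace, a null set, so the pieces overlap in null sets. On a piece of positive
measure g ∘ f = id forces N M = 1 for some integer matrix N, so |det M| = 1 and f preserves
the measure of every subset of the piece; null pieces have null images. Hence μ(f(U)) ≤ μ(U),
and the same bound for g gives equality.
-/

open MeasureTheory

/-- f : ℝ^n → ℝ is a McNaughton function on the unit cube [0,1]^n: continuous on
the cube and piecewise equal, on the cube, to finitely many affine polynomials
with integer coefficients. -/
def IsMcNaughtonOn (n : ℕ) (f : (Fin n → ℝ) → ℝ) : Prop :=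
  ContinuousOn f (Set.Icc 0 1) ∧
    ∃ (k : ℕ) (a : Fin k → Fin n → ℤ) (b : Fin k → ℤ),
      ∀ x ∈ Set.Icc (0 : Fin n → ℝ) 1, ∃ i : Fin k,
        f x = (∑ j : Fin n, (a i j : ℝ) * x j) + (b i : ℝ)

/-- f is a McNaughton homeomorphism of [0,1]^n: a bijection of the cube onto
itself, with inverse g on the cube, all of whose coordinate functions (and those
of g) are McNaughton functions. -/
def IsMcNaughtonHomeo (n : ℕ) (f g : (Fin n → ℝ) → (Fin n → ℝ)) : Prop :=
  Set.BijOn f (Set.Icc 0 1) (Set.Icc 0 1) ∧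
  (∀ x ∈ Set.Icc (0 : Fin n → ℝ) 1, g (f x) = x) ∧
  (∀ y ∈ Set.Icc (0 : Fin n → ℝ) 1, f (g y) = y) ∧
  (∀ i : Fin n, IsMcNaughtonOn n (fun x => f x i)) ∧
  (∀ i : Fin n, IsMcNaughtonOn n (fun x => g x i))

open Set Matrix

instance Matrix.countable {m n α : Type*} [Finite m] [Finite n] [Countable α] :
    Countable (Matrix m n α) :=
  inferInstanceAs (Countable (m → n → α))

theorem MeasureTheory.Measure.addHaar_setOf_apply_eq {E F : Type*} [NormedAddCommGroup E]
    [NormedSpace ℝ E] [MeasurableSpace E] [BorelSpace E] [FiniteDimensional ℝ E] (μ : Measure E)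
    [μ.IsAddHaarMeasure] [AddCommGroup F] [Module ℝ F] {L : E →ₗ[ℝ] F} (hL : L ≠ 0) (y : F) :
    μ {x | L x = y} = 0 := by
  rcases eq_empty_or_nonempty {x | L x = y} with h | ⟨x₀, hx₀⟩
  · rw [h, measure_empty]
  have hfiber : {x | L x = y} = (· + -x₀) ⁻¹' (LinearMap.ker L : Set E) := by
    ext x
    simp only [mem_ofPred_eq, mem_preimage, SetLike.mem_coe, LinearMap.mem_ker, map_add, map_neg,
      hx₀.out, add_neg_eq_zero]
  rw [hfiber, measure_preimage_add_right]
  exact Measure.addHaar_submodule μ _ (mt LinearMap.ker_eq_top.mp hL)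

section AffineMaps

variable {ι : Type*} [Fintype ι] [DecidableEq ι]

theorem Matrix.eq_of_mulVec_add_eqOn {P P' : Matrix ι ι ℝ} {q q' : ι → ℝ} {s : Set (ι → ℝ)}
    (hs : volume s ≠ 0) (h : ∀ x ∈ s, P *ᵥ x + q = P' *ᵥ x + q') : P = P' ∧ q = q' := by
  have hP : P = P' := by
    by_contra hne
    have hL : toLin' (P - P') ≠ 0 := by simpa [sub_eq_zero] using hne
    refine hs (measure_mono_null (fun x hx => ?_)
      (Measure.addHaar_setOf_apply_eq volume hL (q' - q)))
    rw [mem_ofPred_eq, toLin'_apply, sub_mulVec]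
    linear_combination h x hx
  obtain ⟨x, hx⟩ := nonempty_of_measure_ne_zero hs
  exact ⟨hP, add_left_cancel (hP ▸ h x hx)⟩

theorem Matrix.volume_image_mulVec_add (P : Matrix ι ι ℝ) (q : ι → ℝ) (s : Set (ι → ℝ)) :
    volume ((fun x => P *ᵥ x + q) '' s) = ENNReal.ofReal |P.det| * volume s := by
  have h : (fun x => P *ᵥ x + q) '' s = (· + q) '' (toLin' P '' s) := by
    rw [image_image]; simp [toLin'_apply]
  rw [h, image_add_right, measure_preimage_add_right, Measure.addHaar_image_linearMap,
    LinearMap.det_toLin']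

theorem Matrix.abs_det_intCast_eq_one_of_mul_eq_one {M N : Matrix ι ι ℤ}
    (h : N.map (Int.cast : ℤ → ℝ) * M.map Int.cast = 1) :
    |(M.map (Int.cast : ℤ → ℝ)).det| = 1 := by
  have hmap : (N * M).map (Int.cast : ℤ → ℝ) = (1 : Matrix ι ι ℤ).map Int.cast := by
    rw [Matrix.map_one _ Int.cast_zero Int.cast_one, ← h]
    exact Matrix.map_mul (f := Int.castRingHom ℝ)
  have hunit : IsUnit M.det := isUnit_det_of_left_inverse (map_injective Int.cast_injective hmap)
  rw [← Int.cast_det, ← Int.cast_abs, Int.isUnit_iff_abs_eq.mp hunit, Int.cast_one]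

end AffineMaps

namespace IsMcNaughtonHomeo

variable {n : ℕ} {f g : (Fin n → ℝ) → (Fin n → ℝ)}

theorem symm (hf : IsMcNaughtonHomeo n f g) : IsMcNaughtonHomeo n g f :=
  let ⟨hbij, hgf, hfg, hfM, hgM⟩ := hf
  ⟨hbij.symm ⟨hfg, hgf⟩, hfg, hgf, hgM, hfM⟩

theorem continuousOn (hf : IsMcNaughtonHomeo n f g) : ContinuousOn f (Icc 0 1) :=
  continuousOn_pi.mpr fun i => (hf.2.2.2.1 i).1

end IsMcNaughtonHomeo

section Pieces

variable {n : ℕ}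

def intAffine (p : Matrix (Fin n) (Fin n) ℤ × (Fin n → ℤ)) : (Fin n → ℝ) → (Fin n → ℝ) :=
  fun x => p.1.map (Int.cast : ℤ → ℝ) *ᵥ x + fun i => (p.2 i : ℝ)

def affinePiece (f : (Fin n → ℝ) → (Fin n → ℝ)) (p : Matrix (Fin n) (Fin n) ℤ × (Fin n → ℤ)) :
    Set (Fin n → ℝ) :=
  {x ∈ Icc 0 1 | f x = intAffine p x}

variable {f g : (Fin n → ℝ) → (Fin n → ℝ)}

theorem Icc_subset_iUnion_affinePiece (hf : ∀ i, IsMcNaughtonOn n (fun x => f x i)) :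
    Icc 0 1 ⊆ ⋃ p, affinePiece f p := by
  intro x hx
  choose k a b hab using fun i => (hf i).2
  choose l hl using fun i => hab i x hx
  refine mem_iUnion.mpr ⟨(of fun i j => a i (l i) j, fun i => b i (l i)), hx, ?_⟩
  funext i
  simp [intAffine, hl i, mulVec, dotProduct]

theorem measurableSet_affinePiece (hf : ContinuousOn f (Icc 0 1)) (p) :
    MeasurableSet (affinePiece f p) :=
  (isClosed_Icc.isClosed_eq hf (by unfold intAffine; fun_prop)).measurableSet

theorem aedisjoint_affinePiece {p q} (hpq : p ≠ q) :
    AEDisjoint volume (affinePiece f p) (affinePiece f q) := by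
  by_contra h
  obtain ⟨hM, hc⟩ := eq_of_mulVec_add_eqOn h fun x hx => hx.1.2.symm.trans hx.2.2
  exact hpq (Prod.ext (map_injective Int.cast_injective hM)
    (funext fun i => Int.cast_injective (congrFun hc i)))

theorem abs_det_eq_one_of_volume_affinePiece_ne_zero (hf : IsMcNaughtonHomeo n f g) {p}
    (hp : volume (affinePiece f p) ≠ 0) : |(p.1.map (Int.cast : ℤ → ℝ)).det| = 1 := by
  obtain ⟨hbij, hgf, -, -, hgM⟩ := hf
  have hcover : affinePiece f p ⊆ ⋃ q, affinePiece f p ∩ intAffine p ⁻¹' affinePiece g q := by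
    intro x hx
    obtain ⟨q, hq⟩ := mem_iUnion.mp (Icc_subset_iUnion_affinePiece hgM (hbij.mapsTo hx.1))
    exact mem_iUnion.mpr ⟨q, hx, by rwa [mem_preimage, ← hx.2]⟩
  obtain ⟨q, hq⟩ : ∃ q, volume (affinePiece f p ∩ intAffine p ⁻¹' affinePiece g q) ≠ 0 := by
    by_contra! h
    exact hp (measure_mono_null hcover (measure_iUnion_null h))
  have hid : ∀ x ∈ affinePiece f p ∩ intAffine p ⁻¹' affinePiece g q,
      (q.1.map Int.cast * p.1.map Int.cast) *ᵥ x
          + (q.1.map Int.cast *ᵥ (fun i => (p.2 i : ℝ)) + fun i => (q.2 i : ℝ))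
        = (1 : Matrix (Fin n) (Fin n) ℝ) *ᵥ x + 0 := by
    intro x hx
    have hgfx : intAffine q (intAffine p x) = x := by rw [← hx.2.2, ← hx.1.2, hgf x hx.1.1]
    rw [one_mulVec, add_zero, ← mulVec_mulVec]
    simpa [intAffine, mulVec_add, add_assoc] using hgfx
  exact abs_det_intCast_eq_one_of_mul_eq_one (eq_of_mulVec_add_eqOn hq hid).1

theorem volume_image_affinePiece_inter (hf : IsMcNaughtonHomeo n f g) (p) (U : Set (Fin n → ℝ)) :
    volume (intAffine p '' (U ∩ affinePiece f p)) = volume (U ∩ affinePiece f p) := by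
  unfold intAffine
  rw [volume_image_mulVec_add]
  by_cases hp : volume (affinePiece f p) = 0
  · rw [measure_mono_null inter_subset_right hp, mul_zero]
  · rw [abs_det_eq_one_of_volume_affinePiece_ne_zero hf hp, ENNReal.ofReal_one, one_mul]

theorem IsMcNaughtonHomeo.volume_image_le (hf : IsMcNaughtonHomeo n f g) {U : Set (Fin n → ℝ)}
    (hU : U ⊆ Icc 0 1) (hUm : MeasurableSet U) : volume (f '' U) ≤ volume U := by
  have hcover := Icc_subset_iUnion_affinePiece hf.2.2.2.1
  have himage : f '' U ⊆ ⋃ p, intAffine p '' (U ∩ affinePiece f p) := by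
    rintro _ ⟨x, hx, rfl⟩
    obtain ⟨p, hp⟩ := mem_iUnion.mp (hcover (hU hx))
    exact mem_iUnion.mpr ⟨p, x, ⟨hx, hp⟩, hp.2.symm⟩
  calc volume (f '' U)
      ≤ ∑' p, volume (intAffine p '' (U ∩ affinePiece f p)) :=
        (measure_mono himage).trans (measure_iUnion_le _)
    _ = ∑' p, volume (U ∩ affinePiece f p) :=
        tsum_congr fun p => volume_image_affinePiece_inter hf p U
    _ = volume (⋃ p, U ∩ affinePiece f p) :=
        (measure_iUnion₀ (fun p q hpq => (aedisjoint_affinePiece hpq).mono inter_subset_right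
          inter_subset_right)
          fun p => (hUm.inter (measurableSet_affinePiece hf.continuousOn p)).nullMeasurableSet).symm
    _ = volume U := by rw [← inter_iUnion, inter_eq_left.mpr (hU.trans hcover)]

end Pieces

theorem stmt_9_general (n : ℕ) (f g : (Fin n → ℝ) → (Fin n → ℝ))
    (hf : IsMcNaughtonHomeo n f g) :
    ∀ U ⊆ Set.Icc (0 : Fin n → ℝ) 1, MeasurableSet U →
      MeasurableSet (f '' U) ∧ volume (f '' U) = volume U := by
  intro U hU hUm
  have hfU : MeasurableSet (f '' U) :=
    hUm.image_of_continuousOn_injOn (hf.continuousOn.mono hU) (hf.1.injOn.mono hU)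
  refine ⟨hfU, le_antisymm (hf.volume_image_le hU hUm) ?_⟩
  calc volume U = volume (g '' (f '' U)) := by rw [LeftInvOn.image_image' hf.2.1 hU]
    _ ≤ volume (f '' U) :=
      hf.symm.volume_image_le ((image_mono hU).trans hf.1.mapsTo.image_subset) hfU

/-- every McNaughton homeomorphism of [0,1]^n preserves Lebesgue
measure: for every measurable U ⊆ [0,1]^n, f(U) is measurable and
μ(f(U)) = μ(U). -/
theorem stmt_9 (n : ℕ) (hn : 1 ≤ n) (f g : (Fin n → ℝ) → (Fin n → ℝ))
    (hf : IsMcNaughtonHomeo n f g) :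
    ∀ U ⊆ Set.Icc (0 : Fin n → ℝ) 1, MeasurableSet U →
      MeasurableSet (f '' U) ∧ volume (f '' U) = volume U :=
  stmt_9_general n f g hf
end

section
/- Let n ≥ 1, let f be a McNaughton homeomorphism of [0,1]^n, and let k ≥ 1. Then f maps the k-grid of [0,1]^n bijectively onto itself: a point σ ∈ [0,1]^n has rational coordinates with denominator k if and only if f(σ) has rational coordinates with denominator k. -/
/-- A point of [0,1]^n has denominator k: its coordinates are b_i / k with the
integers b_1, …, b_n, k relatively prime (gcd 1). -/
def HasDenominator (n k : ℕ) (x : Fin n → ℝ) : Prop :=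
  ∃ b : Fin n → ℤ, (∀ i : Fin n, x i = (b i : ℝ) / (k : ℝ)) ∧
    Int.gcd (Finset.univ.gcd b) (k : ℤ) = 1

/-! An affine map with integer coefficients sends `(1/m)ℤⁿ` into `(1/m)ℤ`, so a McNaughton
homeomorphism `f` and its inverse both preserve every lattice `(1/m)ℤⁿ` (`m ≥ 1`) inside the cube.
A point has denominator `k` exactly when it lies in `(1/k)ℤⁿ` but in no `(1/m)ℤⁿ` for a proper
divisor `m` of `k`; this description is therefore invariant under `f`. -/

def MemScaledLattice {n : ℕ} (m : ℕ) (x : Fin n → ℝ) : Prop :=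
  ∀ i, ∃ c : ℤ, x i = c / m

theorem IsMcNaughtonOn.exists_int_div {n m : ℕ} {F : (Fin n → ℝ) → ℝ}
    (hF : IsMcNaughtonOn n F) (hm : m ≠ 0) {x : Fin n → ℝ} (hx : x ∈ Set.Icc 0 1)
    (hxm : MemScaledLattice m x) : ∃ d : ℤ, F x = d / m := by
  obtain ⟨-, _, a, b, hab⟩ := hF
  obtain ⟨i, hi⟩ := hab x hx
  choose c hc using hxm
  refine ⟨∑ j, a i j * c j + b i * m, ?_⟩
  rw [hi, eq_div_iff (Nat.cast_ne_zero.mpr hm), add_mul, Finset.sum_mul]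
  push_cast
  congr 1
  refine Finset.sum_congr rfl fun j _ => ?_
  rw [hc j]
  field_simp

theorem MemScaledLattice.of_isMcNaughtonOn {n m : ℕ} {F : (Fin n → ℝ) → (Fin n → ℝ)}
    (hF : ∀ i, IsMcNaughtonOn n (fun x => F x i)) (hm : m ≠ 0) {x : Fin n → ℝ}
    (hx : x ∈ Set.Icc 0 1) (hxm : MemScaledLattice m x) : MemScaledLattice m (F x) :=
  fun i => (hF i).exists_int_div hm hx hxm

theorem IsMcNaughtonHomeo.memScaledLattice_iff {n m : ℕ} {f g : (Fin n → ℝ) → (Fin n → ℝ)}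
    (hf : IsMcNaughtonHomeo n f g) (hm : m ≠ 0) {x : Fin n → ℝ} (hx : x ∈ Set.Icc 0 1) :
    MemScaledLattice m x ↔ MemScaledLattice m (f x) := by
  obtain ⟨hbij, hgf, -, hfm, hgm⟩ := hf
  refine ⟨MemScaledLattice.of_isMcNaughtonOn hfm hm hx, fun hfx => ?_⟩
  rw [← hgf x hx]
  exact MemScaledLattice.of_isMcNaughtonOn hgm hm (hbij.mapsTo hx) hfx

theorem hasDenominator_iff {n k : ℕ} (hk : k ≠ 0) {x : Fin n → ℝ} :
    HasDenominator n k x ↔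
      MemScaledLattice k x ∧ ∀ m, m ∣ k → MemScaledLattice m x → m = k := by
  constructor
  · rintro ⟨b, hb, hgcd⟩
    refine ⟨fun i => ⟨b i, hb i⟩, ?_⟩
    rintro m ⟨t, rfl⟩ hxm
    choose d hd using hxm
    have hmt : (m : ℝ) * t ≠ 0 := by exact_mod_cast hk
    have hm : (m : ℝ) ≠ 0 := left_ne_zero_of_mul hmt
    have hbt : ∀ i, b i = d i * t := fun i => by
      have h := (hb i).symm.trans (hd i)
      rw [Nat.cast_mul, div_eq_div_iff hmt hm] at h
      exact_mod_cast mul_right_cancel₀ hm (h.trans (by ring) : (b i : ℝ) * m = d i * t * m)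
    have ht : (t : ℤ) ∣ Int.gcd (Finset.univ.gcd b) ((m * t : ℕ) : ℤ) :=
      Int.dvd_coe_gcd (Finset.dvd_gcd fun i _ => ⟨d i, by rw [hbt i, mul_comm]⟩)
        ⟨m, by push_cast; ring⟩
    rw [hgcd, Nat.cast_one, Int.natCast_dvd_ofNat, Nat.dvd_one] at ht
    rw [ht, mul_one]
  · rintro ⟨hxk, hmin⟩
    choose b hb using hxk
    refine ⟨b, hb, ?_⟩
    set e := Int.gcd (Finset.univ.gcd b) (k : ℤ)
    obtain ⟨m, hkem⟩ : e ∣ k := Int.ofNat_dvd.mp (Int.gcd_dvd_right _ _)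
    have he : (e : ℝ) ≠ 0 := Nat.cast_ne_zero.mpr (left_ne_zero_of_mul (hkem ▸ hk))
    have hbe : ∀ i, (e : ℤ) ∣ b i := fun i =>
      (Int.gcd_dvd_left _ _).trans (Finset.gcd_dvd (Finset.mem_univ i))
    choose c hc using hbe
    have hxm : MemScaledLattice m x := fun i => ⟨c i, by
      rw [hb i, hc i, hkem]
      push_cast
      rw [mul_div_mul_left _ _ he]⟩
    have hmk := hmin m (Dvd.intro_left e hkem.symm) hxm
    rw [hmk] at hkem
    exact (Nat.mul_eq_right hk).mp hkem.symm

theorem stmt_10_general (n : ℕ) (f g : (Fin n → ℝ) → (Fin n → ℝ))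
    (hf : IsMcNaughtonHomeo n f g) (k : ℕ) (hk : 1 ≤ k) :
    ∀ x ∈ Set.Icc (0 : Fin n → ℝ) 1,
      (HasDenominator n k x ↔ HasDenominator n k (f x)) := by
  intro x hx
  have hk0 : k ≠ 0 := Nat.one_le_iff_ne_zero.mp hk
  have hlattice : ∀ m, m ∣ k → (MemScaledLattice m x ↔ MemScaledLattice m (f x)) :=
    fun m hm => hf.memScaledLattice_iff (ne_zero_of_dvd_ne_zero hk0 hm) hx
  rw [hasDenominator_iff hk0, hasDenominator_iff hk0, hlattice k dvd_rfl]
  exact and_congr_right fun _ => forall_congr' fun m => imp_congr_right fun hm => by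
    rw [hlattice m hm]

/-- a McNaughton homeomorphism of [0,1]^n maps the k-grid
bijectively onto itself: a point of the cube has denominator k iff its image
does. -/
theorem stmt_10 (n : ℕ) (hn : 1 ≤ n) (f g : (Fin n → ℝ) → (Fin n → ℝ))
    (hf : IsMcNaughtonHomeo n f g) (k : ℕ) (hk : 1 ≤ k) :
    ∀ x ∈ Set.Icc (0 : Fin n → ℝ) 1,
      (HasDenominator n k x ↔ HasDenominator n k (f x)) :=
  stmt_10_general n f g hf k hk
end

section
/- The only McNaughton homeomorphisms of the unit interval [0,1] are the identity map and the map x ↦ 1 − x. -/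
/-- f : ℝ → ℝ is a McNaughton function on [0,1]: continuous on [0,1] and
piecewise equal, on [0,1], to finitely many affine polynomials a·x + b with
integer coefficients. -/
def IsMcNaughtonOn1 (f : ℝ → ℝ) : Prop :=
  ContinuousOn f (Set.Icc 0 1) ∧
    ∃ (k : ℕ) (a b : Fin k → ℤ),
      ∀ x ∈ Set.Icc (0 : ℝ) 1, ∃ i : Fin k, f x = (a i : ℝ) * x + (b i : ℝ)

lemma mem_closure_Icc_diff {B : Set ℝ} (hB : B.Finite) {x : ℝ}
    (hx : x ∈ Set.Icc (0:ℝ) 1) : x ∈ closure (Set.Icc (0:ℝ) 1 \ B) := by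
  rw [Metric.mem_closure_iff]
  intro ε hε
  rcases lt_or_eq_of_le hx.2 with h1 | h1
  · have hlt : x < min 1 (x + ε) := lt_min h1 (by linarith)
    obtain ⟨y, ⟨hy1, hy2⟩, hy3⟩ := ((Set.Ioo_infinite hlt).diff hB).nonempty
    have hy2a := (lt_min_iff.mp hy2).1
    have hy2b := (lt_min_iff.mp hy2).2
    refine ⟨y, ⟨⟨by linarith [hx.1], hy2a.le⟩, hy3⟩, ?_⟩
    rw [Real.dist_eq, abs_sub_lt_iff]
    constructor <;> linarith
  · subst h1
    have hlt : max 0 (1 - ε) < 1 := max_lt (by norm_num) (by linarith)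
    obtain ⟨y, ⟨hy1, hy2⟩, hy3⟩ := ((Set.Ioo_infinite hlt).diff hB).nonempty
    have hy1a := lt_of_le_of_lt (le_max_left 0 (1 - ε)) hy1
    have hy1b := lt_of_le_of_lt (le_max_right 0 (1 - ε)) hy1
    refine ⟨y, ⟨⟨hy1a.le, hy2.le⟩, hy3⟩, ?_⟩
    rw [Real.dist_eq, abs_sub_lt_iff]
    constructor <;> linarith

lemma dichotomy (φ : ℝ → ℝ) (hc : Continuous φ) (u v : ℝ)
    (hside : (∀ x ∈ Set.Ioo u v, x < 1/2) ∨ (∀ x ∈ Set.Ioo u v, 1/2 < x))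
    (hsix : ∀ x ∈ Set.Ioo u v, φ x = x ∨ φ x = 1 - x) :
    (∀ x ∈ Set.Ioo u v, φ x = x) ∨ (∀ x ∈ Set.Ioo u v, φ x = 1 - x) := by
  by_contra hcon
  push_neg at hcon
  obtain ⟨⟨p, hp, hp'⟩, ⟨q, hq, hq'⟩⟩ := hcon
  have hfp : φ p = 1 - p := (hsix p hp).resolve_left hp'
  have hfq : φ q = q := (hsix q hq).resolve_right hq'
  have hχc : Continuous (fun x => 2 * φ x - 1) := by fun_prop
  have hmem : (0:ℝ) ∈ Set.uIcc (2 * φ p - 1) (2 * φ q - 1) := by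
    rw [Set.mem_uIcc, hfp, hfq]
    rcases hside with hs | hs
    · have h1 := hs p hp; have h2 := hs q hq
      right; constructor <;> linarith
    · have h1 := hs p hp; have h2 := hs q hq
      left; constructor <;> linarith
  obtain ⟨r, hr, hr0⟩ := intermediate_value_uIcc hχc.continuousOn hmem
  have hrmem : r ∈ Set.Ioo u v := Set.ordConnected_Ioo.uIcc_subset hp hq hr
  have hr2 : φ r = 1/2 := by
    have : 2 * φ r - 1 = 0 := hr0
    linarith
  rcases hsix r hrmem with h | h <;> rcases hside with hs | hs <;>
    (have := hs r hrmem; rw [hr2] at h; linarith)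

/-- the only McNaughton homeomorphisms of [0,1] are the identity
and x ↦ 1 − x. -/
theorem stmt_11 (f g : ℝ → ℝ)
    (hbij : Set.BijOn f (Set.Icc 0 1) (Set.Icc 0 1))
    (hgf : ∀ x ∈ Set.Icc (0 : ℝ) 1, g (f x) = x)
    (hfg : ∀ y ∈ Set.Icc (0 : ℝ) 1, f (g y) = y)
    (hfMc : IsMcNaughtonOn1 f) (hgMc : IsMcNaughtonOn1 g) :
    (∀ x ∈ Set.Icc (0 : ℝ) 1, f x = x) ∨
    (∀ x ∈ Set.Icc (0 : ℝ) 1, f x = 1 - x) := by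
  obtain ⟨hfc, k, a, b, hfp⟩ := hfMc
  obtain ⟨hgc, m, c, d, hgp⟩ := hgMc
  set π : ℝ → ℝ := fun x => max 0 (min 1 x) with hπ
  have hπmem : ∀ x, π x ∈ Set.Icc (0:ℝ) 1 :=
    fun x => ⟨le_max_left _ _, max_le (by norm_num) (min_le_left _ _)⟩
  have hπeq : ∀ x ∈ Set.Icc (0:ℝ) 1, π x = x := by
    intro x hx
    simp [hπ, min_eq_right hx.2, max_eq_right hx.1]
  have hπc : Continuous π := continuous_const.max (continuous_const.min continuous_id)
  set F : ℝ → ℝ := f ∘ π with hFdef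
  have hFc : Continuous F := hfc.comp_continuous hπc hπmem
  have hFeq : ∀ x ∈ Set.Icc (0:ℝ) 1, F x = f x := fun x hx => by
    simp [hFdef, Function.comp, hπeq x hx]
  -- Step 1: six-value property on [0,1]
  have hsix : ∀ x ∈ Set.Icc (0:ℝ) 1,
      f x = x ∨ f x = 1 - x ∨ f x = x - 1 ∨ f x = x + 1 ∨ f x = -x ∨ f x = 2 - x := by
    set Bad : Set ℝ := Set.range (fun p : Fin k × Fin m =>
      ((c p.2 * b p.1 + d p.2 : ℤ) : ℝ) / ((1 - c p.2 * a p.1 : ℤ) : ℝ)) with hBad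
    have hBadfin : Bad.Finite := Set.finite_range _
    set P : ℝ → ℝ := fun x =>
      (F x - x) * (F x - (1 - x)) * (F x - (x - 1)) * (F x - (x + 1)) *
        (F x - (-x)) * (F x - (2 - x)) with hP
    have hPc : Continuous P := by fun_prop
    have hsix' : ∀ x ∈ Set.Icc (0:ℝ) 1 \ Bad,
        f x = x ∨ f x = 1 - x ∨ f x = x - 1 ∨ f x = x + 1 ∨ f x = -x ∨ f x = 2 - x := by
      rintro x ⟨hx, hxB⟩
      obtain ⟨i, hi⟩ := hfp x hx
      have hfxm : f x ∈ Set.Icc (0:ℝ) 1 := hbij.mapsTo hx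
      obtain ⟨j, hj⟩ := hgp (f x) hfxm
      have hx' : x = (c j : ℝ) * ((a i : ℝ) * x + (b i : ℝ)) + (d j : ℝ) := by
        rw [← hi, ← hj, hgf x hx]
      by_cases hone : c j * a i = 1
      · have hca : (c j : ℝ) * (a i : ℝ) = 1 := by exact_mod_cast hone
        have h2 : (c j : ℝ) * (b i : ℝ) + (d j : ℝ) = 0 := by
          linear_combination -hx' - x * hca
        rcases Int.mul_eq_one_iff_eq_one_or_neg_one.mp hone with ⟨hc1, ha1⟩ | ⟨hc1, ha1⟩
        · -- a i = 1 : f x = x + b i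
          have hfx : f x = x + (b i : ℝ) := by rw [hi, ha1]; push_cast; ring
          have hb1 : (-1 : ℝ) ≤ (b i : ℝ) := by
            have := hfxm.1; have := hx.2; linarith [hfx]
          have hb2 : (b i : ℝ) ≤ 1 := by
            have := hfxm.2; have := hx.1; linarith [hfx]
          have hb1' : (-1 : ℤ) ≤ b i := by exact_mod_cast hb1
          have hb2' : b i ≤ 1 := by exact_mod_cast hb2
          have : b i = -1 ∨ b i = 0 ∨ b i = 1 := by omega
          rcases this with h | h | h <;> rw [h] at hfx <;> push_cast at hfx
          · right; right; left; linarith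
          · left; linarith
          · right; right; right; left; linarith
        · -- a i = -1 : f x = -x + b i
          have hfx : f x = -x + (b i : ℝ) := by rw [hi, ha1]; push_cast; ring
          have hb1 : (0 : ℝ) ≤ (b i : ℝ) := by
            have := hfxm.1; have := hx.1; linarith [hfx]
          have hb2 : (b i : ℝ) ≤ 2 := by
            have := hfxm.2; have := hx.2; linarith [hfx]
          have hb1' : (0 : ℤ) ≤ b i := by exact_mod_cast hb1
          have hb2' : b i ≤ 2 := by exact_mod_cast hb2
          have : b i = 0 ∨ b i = 1 ∨ b i = 2 := by omega
          rcases this with h | h | h <;> rw [h] at hfx <;> push_cast at hfx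
          · right; right; right; right; left; linarith
          · right; left; linarith
          · right; right; right; right; right; linarith
      · exfalso
        apply hxB
        refine ⟨(i, j), ?_⟩
        have hden : ((1 - c j * a i : ℤ) : ℝ) ≠ 0 := by
          rw [Int.cast_ne_zero]; omega
        rw [eq_comm, eq_div_iff hden]
        push_cast
        linear_combination hx'
    have hP0 : Set.EqOn P (fun _ => (0:ℝ)) (Set.Icc (0:ℝ) 1 \ Bad) := by
      rintro x ⟨hx, hxB⟩
      have hF : F x = f x := hFeq x hx
      rcases hsix' x ⟨hx, hxB⟩ with h | h | h | h | h | h <;>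
        · simp only [hP, hF, h]; ring
    have hPall : ∀ x ∈ Set.Icc (0:ℝ) 1, P x = 0 := fun x hx =>
      hP0.closure hPc continuous_const (mem_closure_Icc_diff hBadfin hx)
    intro x hx
    have := hPall x hx
    rw [hP] at this
    simp only [hFeq x hx, mul_eq_zero, sub_eq_zero] at this
    tauto
  -- Step 2: on (0,1) only two options
  have hsix2 : ∀ x ∈ Set.Ioo (0:ℝ) 1, F x = x ∨ F x = 1 - x := by
    intro x hx
    have hx' : x ∈ Set.Icc (0:ℝ) 1 := Set.Ioo_subset_Icc_self hx
    have hm : f x ∈ Set.Icc (0:ℝ) 1 := hbij.mapsTo hx'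
    rw [hFeq x hx']
    rcases hsix x hx' with h | h | h | h | h | h
    · left; exact h
    · right; exact h
    all_goals (exfalso; obtain ⟨h1, h2⟩ := hm; obtain ⟨h3, h4⟩ := hx; linarith)
  have hL := dichotomy F hFc 0 (1/2) (Or.inl fun x hx => hx.2)
    (fun x hx => hsix2 x ⟨hx.1, by linarith [hx.2]⟩)
  have hR := dichotomy F hFc (1/2) 1 (Or.inr fun x hx => hx.1)
    (fun x hx => hsix2 x ⟨by linarith [hx.1], hx.2⟩)
  have hhalf : F (1/2 : ℝ) = 1/2 := by
    rcases hsix2 (1/2) (by norm_num) with h | h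
    · exact h
    · rw [h]; norm_num
  have quartL : ((1:ℝ)/4) ∈ Set.Ioo (0:ℝ) (1/2) := by norm_num
  have quartR : ((3:ℝ)/4) ∈ Set.Ioo (1/2:ℝ) 1 := by norm_num
  rcases hL with hL | hL <;> rcases hR with hR | hR
  · left
    have hEq : Set.EqOn F id (Set.Ioo (0:ℝ) 1) := by
      intro x hx
      rcases lt_trichotomy x (1/2) with h | h | h
      · exact hL x ⟨hx.1, h⟩
      · rw [h]; exact hhalf
      · exact hR x ⟨h, hx.2⟩
    have hcl := hEq.closure hFc continuous_id
    rw [closure_Ioo (by norm_num : (0:ℝ) ≠ 1)] at hcl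
    intro x hx
    rw [← hFeq x hx]
    exact hcl hx
  · exfalso
    have h1 : F (1/4 : ℝ) = 1/4 := hL _ quartL
    have h2 : F (3/4 : ℝ) = 1/4 := by rw [hR _ quartR]; norm_num
    have e1 : f (1/4 : ℝ) = f (3/4 : ℝ) := by
      rw [← hFeq _ (by norm_num : (1/4:ℝ) ∈ Set.Icc (0:ℝ) 1),
        ← hFeq _ (by norm_num : (3/4:ℝ) ∈ Set.Icc (0:ℝ) 1), h1, h2]
    have := hbij.injOn (by norm_num : (1/4:ℝ) ∈ Set.Icc (0:ℝ) 1)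
      (by norm_num : (3/4:ℝ) ∈ Set.Icc (0:ℝ) 1) e1
    norm_num at this
  · exfalso
    have h1 : F (1/4 : ℝ) = 3/4 := by rw [hL _ quartL]; norm_num
    have h2 : F (3/4 : ℝ) = 3/4 := hR _ quartR
    have e1 : f (1/4 : ℝ) = f (3/4 : ℝ) := by
      rw [← hFeq _ (by norm_num : (1/4:ℝ) ∈ Set.Icc (0:ℝ) 1),
        ← hFeq _ (by norm_num : (3/4:ℝ) ∈ Set.Icc (0:ℝ) 1), h1, h2]
    have := hbij.injOn (by norm_num : (1/4:ℝ) ∈ Set.Icc (0:ℝ) 1)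
      (by norm_num : (3/4:ℝ) ∈ Set.Icc (0:ℝ) 1) e1
    norm_num at this
  · right
    have hEq : Set.EqOn F (fun x => 1 - x) (Set.Ioo (0:ℝ) 1) := by
      intro x hx
      rcases lt_trichotomy x (1/2) with h | h | h
      · exact hL x ⟨hx.1, h⟩
      · rw [h]; rw [hhalf]; norm_num
      · exact hR x ⟨h, hx.2⟩
    have hcl := hEq.closure hFc (by fun_prop)
    rw [closure_Ioo (by norm_num : (0:ℝ) ≠ 1)] at hcl
    intro x hx
    rw [← hFeq x hx]
    exact hcl hx
end

section
/- In every MV-algebra N, the intersection of all prime ideals of N equals {0}: an element a ∈ N belongs to every prime ideal of N if and only if a = 0. -/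
/-- An MV-algebra (Mangani–Mundici axioms). -/
class MV (α : Type*) where
  add : α → α → α
  neg : α → α
  zero : α
  add_comm : ∀ a b : α, add a b = add b a
  add_assoc : ∀ a b c : α, add a (add b c) = add (add a b) c
  add_zero : ∀ a : α, add a zero = a
  add_neg_zero : ∀ a : α, add a (neg zero) = neg zero
  neg_neg : ∀ a : α, neg (neg a) = a
  luk : ∀ a b : α, add (neg (add (neg a) b)) b = add (neg (add (neg b) a)) a

namespace MV

variable {α : Type*} [MV α]

/-- 1 := ¬0 -/
def one : α := neg zero

/-- a ⊗ b := ¬(¬a ⊕ ¬b) -/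
def mul (a b : α) : α := neg (add (neg a) (neg b))

/-- a ∨ b := ¬(¬a ⊕ b) ⊕ b -/
def sup (a b : α) : α := add (neg (add (neg a) b)) b

/-- a ∧ b := ¬(¬a ∨ ¬b) -/
def inf (a b : α) : α := neg (sup (neg a) (neg b))

/-- a ≤ b iff a ∨ b = b -/
def le (a b : α) : Prop := sup a b = b

/-- An ideal: contains 0, closed under ⊕, downward closed. -/
def IsIdeal (J : Set α) : Prop :=
  zero ∈ J ∧ (∀ a b : α, a ∈ J → b ∈ J → add a b ∈ J) ∧
    (∀ a b : α, le a b → b ∈ J → a ∈ J)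

/-- A prime ideal: proper, and a ∧ b ∈ J implies a ∈ J or b ∈ J. -/
def IsPrime (J : Set α) : Prop :=
  IsIdeal J ∧ J ≠ Set.univ ∧ ∀ a b : α, inf a b ∈ J → a ∈ J ∨ b ∈ J

/-- A maximal ideal: proper, and not properly contained in any proper ideal. -/
def IsMaximal (J : Set α) : Prop :=
  IsIdeal J ∧ J ≠ Set.univ ∧
    ∀ K : Set α, IsIdeal K → K ≠ Set.univ → J ⊆ K → J = K

/-- k·a = a ⊕ a ⊕ ⋯ ⊕ a (k summands). -/
def smul : ℕ → α → α
  | 0, _ => zero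
  | k + 1, a => add a (smul k a)

/-- a^k = a ⊗ a ⊗ ⋯ ⊗ a (k factors). -/
def pow (a : α) : ℕ → α
  | 0 => one
  | k + 1 => mul a (pow a k)

/-- A homomorphism into the standard MV-algebra [0,1]. -/
def Hom (h : α → ℝ) : Prop :=
  (∀ a : α, h a ∈ Set.Icc (0 : ℝ) 1) ∧
  (∀ a b : α, h (add a b) = min (h a + h b) 1) ∧
  (∀ a : α, h (neg a) = 1 - h a) ∧
  h zero = 0

end MV
namespace MV

variable {α : Type*} [MV α]

lemma zero_add (a : α) : add zero a = a := by rw [add_comm]; exact add_zero a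

lemma neg_one : (neg one : α) = zero := neg_neg zero

lemma add_one (a : α) : add a one = one := add_neg_zero a

lemma one_add (a : α) : add one a = one := by rw [add_comm]; exact add_neg_zero a

lemma neg_add_self (a : α) : add (neg a) a = one := by
  have h := luk a (one : α)
  rw [add_one, neg_one, zero_add] at h
  exact h.symm

lemma add_neg_self (a : α) : add a (neg a) = one := by
  rw [add_comm]; exact neg_add_self a

lemma sup_comm (a b : α) : sup a b = sup b a := luk a b

lemma le_of_eq_one {a b : α} (h : add (neg a) b = one) : le a b := by
  unfold le sup
  rw [h, neg_one, zero_add]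

lemma le_of_exists {a b : α} (h : ∃ c, b = add a c) : le a b := by
  obtain ⟨c, rfl⟩ := h
  apply le_of_eq_one
  rw [add_assoc, neg_add_self, one_add]

lemma exists_add_of_le {a b : α} (h : le a b) : ∃ c, b = add a c := by
  refine ⟨neg (add (neg b) a), ?_⟩
  have h2 : sup b a = b := by rw [sup_comm]; exact h
  conv_lhs => rw [← h2]
  unfold sup
  rw [add_comm]

lemma eq_one_of_le {a b : α} (h : le a b) : add (neg a) b = one := by
  obtain ⟨c, rfl⟩ := exists_add_of_le h
  rw [add_assoc, neg_add_self, one_add]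

lemma le_refl (a : α) : le a a := le_of_eq_one (neg_add_self a)

lemma le_trans {a b c : α} (h1 : le a b) (h2 : le b c) : le a c := by
  obtain ⟨u, rfl⟩ := exists_add_of_le h1
  obtain ⟨v, rfl⟩ := exists_add_of_le h2
  exact le_of_exists ⟨add u v, (add_assoc a u v).symm⟩

lemma le_antisymm {a b : α} (h1 : le a b) (h2 : le b a) : a = b := by
  have := sup_comm a b
  unfold le at h1 h2
  rw [h1, h2] at this
  exact this.symm

lemma le_add_left (a c : α) : le a (add a c) := le_of_exists ⟨c, rfl⟩

lemma le_add_right (a c : α) : le a (add c a) := le_of_exists ⟨c, add_comm c a⟩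

lemma zero_le (a : α) : le zero a := le_of_exists ⟨a, (zero_add a).symm⟩

lemma eq_zero_of_le_zero {a : α} (h : le a zero) : a = zero := by
  unfold le sup at h
  rw [add_zero, add_zero, neg_neg] at h
  exact h

lemma add_le_add_left {b c : α} (a : α) (h : le b c) : le (add a b) (add a c) := by
  obtain ⟨u, rfl⟩ := exists_add_of_le h
  exact le_of_exists ⟨u, add_assoc a b u⟩

lemma add_le_add_right {b c : α} (h : le b c) (a : α) : le (add b a) (add c a) := by
  rw [add_comm b a, add_comm c a]; exact add_le_add_left a h

lemma add_le_add {a b c d : α} (h1 : le a b) (h2 : le c d) : le (add a c) (add b d) :=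
  le_trans (add_le_add_right h1 c) (add_le_add_left b h2)

lemma neg_le_neg {a b : α} (h : le a b) : le (neg b) (neg a) := by
  apply le_of_eq_one
  rw [neg_neg, add_comm]
  exact eq_one_of_le h

/-- a ⊖ b := a ⊗ ¬b -/
def msub (a b : α) : α := mul a (neg b)

lemma resid {a b c : α} : le (mul a b) c ↔ le a (add (neg b) c) := by
  constructor
  · intro h
    apply le_of_eq_one
    have := eq_one_of_le h
    unfold mul at this
    rw [neg_neg] at this
    rw [add_assoc]
    exact this
  · intro h
    apply le_of_eq_one
    have := eq_one_of_le h
    rw [add_assoc] at this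
    unfold mul
    rw [neg_neg]
    exact this

lemma msub_le_iff {a b c : α} : le (msub a b) c ↔ le a (add b c) := by
  unfold msub
  rw [resid, neg_neg]

lemma le_add_msub (a b : α) : le a (add b (msub a b)) :=
  msub_le_iff.mp (le_refl _)

lemma mul_le_left (a b : α) : le (mul a b) a := by
  apply le_of_eq_one
  unfold mul
  rw [neg_neg, add_comm (neg a) (neg b), ← add_assoc, neg_add_self, add_one]

lemma msub_le_self (a b : α) : le (msub a b) a := mul_le_left a (neg b)

lemma mul_le_mul_right {a c : α} (h : le a c) (b : α) : le (mul a b) (mul c b) := by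
  rw [resid]
  exact le_trans h (resid.mp (le_refl (mul c b)))

lemma msub_le_msub {a c : α} (h : le a c) (b : α) : le (msub a b) (msub c b) :=
  mul_le_mul_right h (neg b)

lemma sup_eq_msub_add (a b : α) : sup a b = add (msub a b) b := by
  unfold sup msub mul
  rw [neg_neg]

lemma eq_add_msub {b c : α} (h : le b c) : c = add b (msub c b) := by
  rw [add_comm, ← sup_eq_msub_add, sup_comm]
  exact h.symm

lemma le_sup_right (a b : α) : le b (sup a b) := by
  rw [sup_eq_msub_add]
  exact le_add_right b (msub a b)

lemma le_sup_left (a b : α) : le a (sup a b) := by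
  rw [sup_comm]
  exact le_sup_right b a

lemma sup_le {a b c : α} (h1 : le a c) (h2 : le b c) : le (sup a b) c := by
  have h3 : le (add (msub a b) b) (add (msub c b) b) :=
    add_le_add_right (msub_le_msub h1 b) b
  rw [← sup_eq_msub_add c b, sup_comm c b] at h3
  unfold le at h2
  rw [h2] at h3
  rw [sup_eq_msub_add]
  exact h3

lemma inf_le_left (a b : α) : le (inf a b) a := by
  have := neg_le_neg (le_sup_left (neg a) (neg b))
  rw [neg_neg] at this
  exact this

lemma inf_le_right (a b : α) : le (inf a b) b := by
  have := neg_le_neg (le_sup_right (neg a) (neg b))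
  rw [neg_neg] at this
  exact this

lemma le_inf {a b c : α} (h1 : le c a) (h2 : le c b) : le c (inf a b) := by
  have := neg_le_neg (sup_le (neg_le_neg h1) (neg_le_neg h2))
  rw [neg_neg] at this
  exact this

lemma inf_comm (a b : α) : inf a b = inf b a :=
  le_antisymm (le_inf (inf_le_right a b) (inf_le_left a b))
    (le_inf (inf_le_right b a) (inf_le_left b a))

/-- Riesz-type inequality: (u ⊕ v) ∧ z ≤ (u ∧ z) ⊕ (v ∧ z). -/
lemma inf_add_le (u v z : α) : le (inf (add u v) z) (add (inf u z) (inf v z)) := by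
  set m := inf (add u v) z with hm
  have hmz : le m z := inf_le_right _ _
  have hmu : le (msub m u) v := msub_le_iff.mpr (inf_le_left _ _)
  have h1 : le (msub m u) (inf v z) := le_inf hmu (le_trans (msub_le_self m u) hmz)
  have h2 : le m (add u (inf v z)) :=
    le_trans (le_add_msub m u) (add_le_add_left u h1)
  have h3 : le (msub m (inf v z)) u := by
    rw [msub_le_iff, add_comm (inf v z) u]
    exact h2
  have h4 : le (msub m (inf v z)) (inf u z) :=
    le_inf h3 (le_trans (msub_le_self _ _) hmz)
  have h5 : le m (add (inf v z) (inf u z)) :=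
    le_trans (le_add_msub m (inf v z)) (add_le_add_left _ h4)
  rw [add_comm] at h5
  exact h5

/-- combine two upper bounds: (p ⊕ u) ∧ (q ⊕ v) ≤ (p ⊕ q) ⊕ (u ∧ v) -/
lemma inf_add_add_le (p u q v : α) :
    le (inf (add p u) (add q v)) (add (add p q) (inf u v)) := by
  set m := inf (add p u) (add q v) with hm
  have h1 : le (msub m p) u := msub_le_iff.mpr (inf_le_left _ _)
  have h2 : le (msub (msub m p) q) v :=
    msub_le_iff.mpr (le_trans (msub_le_self m p) (inf_le_right _ _))
  have h3 : le (msub (msub m p) q) (inf u v) :=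
    le_inf (le_trans (msub_le_self _ _) h1) h2
  have h4 : le (msub m p) (add q (inf u v)) :=
    le_trans (le_add_msub _ q) (add_le_add_left q h3)
  have h5 : le m (add p (add q (inf u v))) :=
    le_trans (le_add_msub m p) (add_le_add_left p h4)
  rw [add_assoc] at h5
  exact h5

lemma smul_le_smul {x y : α} (h : le x y) : ∀ n, le (smul n x) (smul n y)
  | 0 => le_refl _
  | n + 1 => add_le_add h (smul_le_smul h n)

lemma inf_smul_le (z x : α) : ∀ n, le (inf (smul n x) z) (smul n (inf x z))
  | 0 => inf_le_left _ _
  | n + 1 => by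
    have h1 : le (inf (smul (n+1) x) z) (add (inf x z) (inf (smul n x) z)) :=
      inf_add_le x (smul n x) z
    exact le_trans h1 (add_le_add_left _ (inf_smul_le z x n))

lemma smul_mem {J : Set α} (hJ : IsIdeal J) {x : α} (hx : x ∈ J) :
    ∀ n, smul n x ∈ J
  | 0 => hJ.1
  | n + 1 => hJ.2.1 _ _ hx (smul_mem hJ hx n)

lemma smul_add_smul (x : α) : ∀ n k, smul (n + k) x = add (smul n x) (smul k x)
  | 0, k => by
    rw [Nat.zero_add]
    show smul k x = add zero (smul k x)
    rw [zero_add]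
  | n + 1, k => by
    have : n + 1 + k = (n + k) + 1 := by omega
    rw [this]
    show add x (smul (n + k) x) = add (add x (smul n x)) (smul k x)
    rw [smul_add_smul x n k, add_assoc]

lemma add_add_add_comm (a b c d : α) :
    add (add a b) (add c d) = add (add a c) (add b d) := by
  rw [← add_assoc, add_assoc b c d, add_comm b c, ← add_assoc c b d, add_assoc]

/-- the ideal generated by an ideal `M` and an element `x`. -/
def Jgen (M : Set α) (x : α) : Set α :=
  {z | ∃ m ∈ M, ∃ n : ℕ, le z (add m (smul n x))}

end MV
namespace MV

variable {α : Type*} [MV α]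

lemma Jgen_isIdeal {M : Set α} (hM : IsIdeal M) (x : α) : IsIdeal (Jgen M x) := by
  refine ⟨⟨zero, hM.1, 0, ?_⟩, ?_, ?_⟩
  · show le zero (add zero (smul 0 x))
    exact zero_le _
  · rintro z1 z2 ⟨m1, hm1, n1, h1⟩ ⟨m2, hm2, n2, h2⟩
    refine ⟨add m1 m2, hM.2.1 _ _ hm1 hm2, n1 + n2, ?_⟩
    rw [smul_add_smul]
    have h3 : le (add z1 z2) (add (add m1 (smul n1 x)) (add m2 (smul n2 x))) :=
      add_le_add h1 h2
    rw [add_add_add_comm] at h3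
    exact h3
  · rintro z1 z2 hz ⟨m, hm, n, h⟩
    exact ⟨m, hm, n, le_trans hz h⟩

lemma mem_Jgen_self {M : Set α} (hM : IsIdeal M) (x : α) : x ∈ Jgen M x :=
  ⟨zero, hM.1, 1, by
    show le x (add zero (add x (smul 0 x)))
    show le x (add zero (add x zero))
    rw [zero_add, add_zero]
    exact le_refl x⟩

lemma subset_Jgen {M : Set α} (x : α) : M ⊆ Jgen M x := by
  intro m hm
  exact ⟨m, hm, 0, by
    show le m (add m zero)
    rw [add_zero]; exact le_refl m⟩

lemma exists_prime_not_mem {a : α} (ha : a ≠ zero) :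
    ∃ M : Set α, IsPrime M ∧ a ∉ M := by
  set S : Set (Set α) := {J | IsIdeal J ∧ a ∉ J} with hS
  have hz : ({zero} : Set α) ∈ S := by
    refine ⟨⟨rfl, ?_, ?_⟩, ?_⟩
    · rintro x y rfl rfl
      simp only [Set.mem_singleton_iff]
      exact add_zero zero
    · rintro x y hxy rfl
      exact eq_zero_of_le_zero hxy
    · simpa using ha
  have hub : ∀ c ⊆ S, IsChain (· ⊆ ·) c → c.Nonempty →
      ∃ ub ∈ S, ∀ s ∈ c, s ⊆ ub := by
    intro c hcS hchain hcne
    refine ⟨⋃₀ c, ⟨⟨?_, ?_, ?_⟩, ?_⟩, fun s hs => Set.subset_sUnion_of_mem hs⟩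
    · obtain ⟨J, hJ⟩ := hcne
      exact ⟨J, hJ, (hcS hJ).1.1⟩
    · rintro x y ⟨J1, hJ1, hx⟩ ⟨J2, hJ2, hy⟩
      rcases hchain.total hJ1 hJ2 with h | h
      · exact ⟨J2, hJ2, (hcS hJ2).1.2.1 _ _ (h hx) hy⟩
      · exact ⟨J1, hJ1, (hcS hJ1).1.2.1 _ _ hx (h hy)⟩
    · rintro x y hxy ⟨J, hJ, hy⟩
      exact ⟨J, hJ, (hcS hJ).1.2.2 _ _ hxy hy⟩
    · rintro ⟨J, hJ, haJ⟩
      exact (hcS hJ).2 haJ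
  obtain ⟨M, -, hMS, hMmax⟩ := zorn_subset_nonempty S hub _ hz
  -- M is a maximal element of S
  have hMideal : IsIdeal M := hMS.1
  have haM : a ∉ M := hMS.2
  refine ⟨M, ⟨hMideal, ?_, ?_⟩, haM⟩
  · intro h
    exact haM (h ▸ Set.mem_univ a)
  · intro x y hxy
    by_contra hcon
    push_neg at hcon
    obtain ⟨hx, hy⟩ := hcon
    -- a belongs to the ideal generated by M and x
    have key : ∀ w : α, w ∉ M → ∃ m ∈ M, ∃ n : ℕ, le a (add m (smul n w)) := by
      intro w hw
      have hJw : IsIdeal (Jgen M w) := Jgen_isIdeal hMideal w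
      have haJw : a ∈ Jgen M w := by
        by_contra haJ
        have : Jgen M w ⊆ M := hMmax ⟨hJw, haJ⟩ (subset_Jgen w)
        exact hw (this (mem_Jgen_self hMideal w))
      exact haJw
    obtain ⟨m1, hm1, n1, h1⟩ := key x hx
    obtain ⟨m2, hm2, n2, h2⟩ := key y hy
    -- combine the two bounds
    have hle1 : le a (inf (add m1 (smul n1 x)) (add m2 (smul n2 y))) := le_inf h1 h2
    have hle2 : le (inf (add m1 (smul n1 x)) (add m2 (smul n2 y)))
        (add (add m1 m2) (inf (smul n1 x) (smul n2 y))) := inf_add_add_le _ _ _ _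
    have hle3 : le (inf (smul n1 x) (smul n2 y)) (smul n1 (inf x (smul n2 y))) :=
      inf_smul_le _ _ _
    have hle4 : le (inf x (smul n2 y)) (smul n2 (inf y x)) := by
      have := inf_smul_le x y n2
      rw [inf_comm] at this
      exact this
    have hle5 : le (inf (smul n1 x) (smul n2 y)) (smul n1 (smul n2 (inf y x))) :=
      le_trans hle3 (smul_le_smul hle4 n1)
    -- the bound lies in M
    have hyx : inf y x ∈ M := by rw [inf_comm]; exact hxy
    have hmem : add (add m1 m2) (smul n1 (smul n2 (inf y x))) ∈ M :=
      hMideal.2.1 _ _ (hMideal.2.1 _ _ hm1 hm2)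
        (smul_mem hMideal (smul_mem hMideal hyx n2) n1)
    have : le a (add (add m1 m2) (smul n1 (smul n2 (inf y x)))) :=
      le_trans hle1 (le_trans hle2 (add_le_add_left _ hle5))
    exact haM (hMideal.2.2 _ _ this hmem)

end MV

/-- in every MV-algebra, the intersection of all prime ideals is
{0}: an element belongs to every prime ideal iff it equals 0. -/
theorem stmt_13 {α : Type*} [MV α] (a : α) :
    (∀ J : Set α, MV.IsPrime J → a ∈ J) ↔ a = MV.zero := by
  constructor
  · intro h
    by_contra ha
    obtain ⟨M, hM, haM⟩ := MV.exists_prime_not_mem ha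
    exact haM (h M hM)
  · rintro rfl J hJ
    exact hJ.1.1
end

section
/- Let N be an MV-algebra with 0 ≠ 1. The following are equivalent: (a) N is simple, i.e., {0} is the only proper ideal of N; (b) every nonzero element of N has finite order: for every a ≠ 0 there exists k ≥ 1 with ka = 1, where ka denotes a ⊕ a ⊕ ⋯ ⊕ a (k summands); (c) there exists an injective map h : N → [0,1] preserving the operations (h(a ⊕ b) = min(h(a) + h(b), 1), h(¬a) = 1 − h(a), h(0) = 0). -/
/-!
The MV-operations `⊕`, `¬`, `⊗` are installed on `α` as `+`, `ᶜ`, `*`, together with the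
order `≤` and the lattice operations `⊔`, `⊓`.

(a) ⇒ (b): the ideal `{b | ∃ k, b ≤ k • a}` contains `a ≠ 0`, hence is everything, so
`1 ≤ k • a`. (b) ⇒ (a) and (c) ⇒ (b) are immediate, because `h (k • a) = min (k * h a) 1`.

(b) ⇒ (c): finite order forces `α` to be a chain, since `a * bᶜ ⊓ b * aᶜ = 0` and
`x ⊓ k • y ≤ k • (x ⊓ y)`. A chain is the unit interval of Chang's totally ordered abelian
group of pairs `(n, a) ∈ ℤ × α` with `a ≠ 1`, added with carries; finite order makes this group
archimedean, so Hölder's theorem (`Archimedean.embedReal`) embeds it into `ℝ` with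
`(1, 0) ↦ 1`, and its restriction to `α` is the required embedding into `[0, 1]`.
-/

namespace MVAlgebra

variable {α : Type*} [MV α]

-- With `nsmul := MV.smul`, `k • a` is definitionally `MV.smul k a`.
instance : AddCommMonoid α where
  add := MV.add
  zero := MV.zero
  add_assoc a b c := (MV.add_assoc a b c).symm
  zero_add a := (MV.add_comm MV.zero a).trans (MV.add_zero a)
  add_zero := MV.add_zero
  add_comm := MV.add_comm
  nsmul := MV.smul
  nsmul_zero _ := rfl
  nsmul_succ _ _ := MV.add_comm _ _

instance : One α := ⟨MV.one⟩

instance : Compl α := ⟨MV.neg⟩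

@[simp] theorem compl_compl (a : α) : aᶜᶜ = a := MV.neg_neg a

theorem compl_zero : (0 : α)ᶜ = 1 := rfl

@[simp] theorem compl_one : (1 : α)ᶜ = 0 := MV.neg_neg MV.zero

@[simp] theorem add_one (a : α) : a + 1 = 1 := MV.add_neg_zero a

@[simp] theorem one_add (a : α) : 1 + a = 1 := by rw [add_comm, add_one]

theorem compl_injective : Function.Injective (compl : α → α) :=
  Function.LeftInverse.injective compl_compl

theorem luk (a b : α) : (aᶜ + b)ᶜ + b = (bᶜ + a)ᶜ + a := MV.luk a b

@[simp] theorem compl_add_self (a : α) : aᶜ + a = 1 := by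
  simpa using luk 1 a

theorem compl_add_add_self (a c : α) : aᶜ + (a + c) = 1 := by
  rw [← add_assoc, compl_add_self, one_add]

theorem le_iff_exists_add {a b : α} : MV.le a b ↔ ∃ c, b = a + c := by
  constructor
  · intro h
    refine ⟨(bᶜ + a)ᶜ, ?_⟩
    rw [add_comm]
    exact h.symm.trans (MV.luk a b)
  · rintro ⟨c, rfl⟩
    show (aᶜ + (a + c))ᶜ + (a + c) = a + c
    rw [compl_add_add_self, compl_one, zero_add]

instance : PartialOrder α where
  le := MV.le
  le_refl a := le_iff_exists_add.2 ⟨0, (add_zero a).symm⟩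
  le_trans a b c hab hbc := by
    obtain ⟨x, rfl⟩ := le_iff_exists_add.1 hab
    obtain ⟨y, rfl⟩ := le_iff_exists_add.1 hbc
    exact le_iff_exists_add.2 ⟨x + y, add_assoc a x y⟩
  le_antisymm a b hab hba := hba.symm.trans ((MV.luk a b).symm.trans hab)

instance : CanonicallyOrderedAdd α where
  exists_add_of_le h := le_iff_exists_add.1 h
  le_add_self _ b := le_iff_exists_add.2 ⟨b, add_comm _ _⟩
  le_self_add _ b := le_iff_exists_add.2 ⟨b, rfl⟩

instance : IsOrderedAddMonoid α where
  add_le_add_left a b h c := by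
    obtain ⟨d, rfl⟩ := exists_add_of_le h
    exact le_iff_exists_add.2 ⟨d, add_right_comm a d c⟩

theorem le_iff_compl_add_eq_one {a b : α} : a ≤ b ↔ aᶜ + b = 1 := by
  constructor
  · intro h
    obtain ⟨c, rfl⟩ := exists_add_of_le h
    exact compl_add_add_self a c
  · intro h
    show (aᶜ + b)ᶜ + b = b
    rw [h, compl_one, zero_add]

theorem add_eq_one_iff_compl_le {a b : α} : a + b = 1 ↔ aᶜ ≤ b := by
  rw [le_iff_compl_add_eq_one, compl_compl]

theorem le_one (a : α) : a ≤ 1 := le_iff_compl_add_eq_one.2 (add_one _)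

theorem one_le_iff_eq_one {a : α} : 1 ≤ a ↔ a = 1 :=
  ⟨fun h => le_antisymm (le_one a) h, fun h => h.ge⟩

@[gcongr] theorem compl_le_compl {a b : α} (h : a ≤ b) : bᶜ ≤ aᶜ := by
  rw [le_iff_compl_add_eq_one, compl_compl, add_comm, ← le_iff_compl_add_eq_one]
  exact h

@[simp] theorem compl_le_compl_iff {a b : α} : bᶜ ≤ aᶜ ↔ a ≤ b :=
  ⟨fun h => by simpa using compl_le_compl h, compl_le_compl⟩

theorem le_compl_comm {a b : α} : a ≤ bᶜ ↔ b ≤ aᶜ := by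
  rw [← compl_le_compl_iff, compl_compl]

theorem compl_le_comm {a b : α} : aᶜ ≤ b ↔ bᶜ ≤ a := by
  rw [← compl_le_compl_iff, compl_compl]

instance : SemilatticeSup α where
  sup a b := (aᶜ + b)ᶜ + b
  le_sup_left a b := by
    show a ≤ (aᶜ + b)ᶜ + b
    rw [luk]
    exact le_add_self
  le_sup_right _ _ := le_add_self
  sup_le a b c hac hbc :=
    calc (aᶜ + b)ᶜ + b ≤ (cᶜ + b)ᶜ + b := by gcongr
      _ = (bᶜ + c)ᶜ + c := luk c b
      _ ≤ (cᶜ + c)ᶜ + c := by gcongr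
      _ = c := by simp

theorem sup_def (a b : α) : a ⊔ b = (aᶜ + b)ᶜ + b := rfl

instance : Lattice α where
  inf a b := (aᶜ ⊔ bᶜ)ᶜ
  inf_le_left a b := by simpa using compl_le_compl (le_sup_left : aᶜ ≤ aᶜ ⊔ bᶜ)
  inf_le_right a b := by simpa using compl_le_compl (le_sup_right : bᶜ ≤ aᶜ ⊔ bᶜ)
  le_inf a b c hab hac := by
    simpa using compl_le_compl (sup_le (compl_le_compl hab) (compl_le_compl hac))

theorem compl_sup (a b : α) : (a ⊔ b)ᶜ = aᶜ ⊓ bᶜ := by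
  show _ = (aᶜᶜ ⊔ bᶜᶜ)ᶜ
  simp

instance : CommMonoid α where
  mul a b := (aᶜ + bᶜ)ᶜ
  mul_assoc a b c := by
    show ((aᶜ + bᶜ)ᶜᶜ + cᶜ)ᶜ = (aᶜ + (bᶜ + cᶜ)ᶜᶜ)ᶜ
    simp [add_assoc]
  one_mul a := by
    show (1ᶜ + aᶜ)ᶜ = a
    simp
  mul_one a := by
    show (aᶜ + 1ᶜ)ᶜ = a
    simp
  mul_comm a b := by
    show (aᶜ + bᶜ)ᶜ = (bᶜ + aᶜ)ᶜ
    rw [add_comm]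

theorem mul_def (a b : α) : a * b = (aᶜ + bᶜ)ᶜ := rfl

theorem compl_add (a b : α) : (a + b)ᶜ = aᶜ * bᶜ := by simp [mul_def]

theorem compl_mul (a b : α) : (a * b)ᶜ = aᶜ + bᶜ := by simp [mul_def]

@[simp] theorem mul_compl_self (a : α) : a * aᶜ = 0 := by simp [mul_def, ← compl_zero]

instance : IsOrderedMonoid α where
  mul_le_mul_left a b h c := by
    rw [← compl_le_compl_iff, compl_mul, compl_mul]
    gcongr

theorem mul_le_left (a b : α) : a * b ≤ a := mul_le_of_le_one_right' (le_one b)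

theorem mul_le_right (a b : α) : a * b ≤ b := mul_le_of_le_one_left' (le_one a)

theorem mul_le_iff_le_compl_add {a b c : α} : a * b ≤ c ↔ b ≤ aᶜ + c := by
  rw [le_iff_compl_add_eq_one, le_iff_compl_add_eq_one, compl_mul, add_assoc, add_left_comm]

theorem mul_compl_eq_compl_add (a b : α) : a * bᶜ = (aᶜ + b)ᶜ := by simp [mul_def]

theorem mul_compl_eq_zero_iff {a b : α} : a * bᶜ = 0 ↔ a ≤ b := by
  rw [mul_compl_eq_compl_add, le_iff_compl_add_eq_one, ← compl_one]
  exact compl_injective.eq_iff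

theorem sup_eq_mul_compl_add (a b : α) : a ⊔ b = a * bᶜ + b := by
  rw [sup_def, mul_compl_eq_compl_add]

theorem compl_mul_add_le (a b : α) : aᶜ * (a + b) ≤ b :=
  mul_le_iff_le_compl_add.2 (by rw [compl_compl])

theorem add_inf (a b c : α) : a + b ⊓ c = (a + b) ⊓ (a + c) := by
  refine le_antisymm (le_inf (by gcongr; exact inf_le_left) (by gcongr; exact inf_le_right)) ?_
  have h : aᶜ * ((a + b) ⊓ (a + c)) ≤ b ⊓ c :=
    le_inf ((mul_le_mul_right inf_le_left _).trans (compl_mul_add_le a b))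
      ((mul_le_mul_right inf_le_right _).trans (compl_mul_add_le a c))
  simpa using mul_le_iff_le_compl_add.1 h

theorem inf_add_le (a b c : α) : a ⊓ (b + c) ≤ a ⊓ b + a ⊓ c := by
  rw [add_inf, add_comm (a ⊓ b) c, add_inf]
  refine le_inf (inf_le_left.trans le_add_self) (le_inf (inf_le_left.trans le_add_self) ?_)
  rw [add_comm]
  exact inf_le_right

theorem inf_nsmul_le (a b : α) (n : ℕ) : a ⊓ n • b ≤ n • (a ⊓ b) := by
  induction n with
  | zero => simp
  | succ n ih =>
    rw [succ_nsmul, succ_nsmul]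
    exact (inf_add_le a _ b).trans (add_le_add_left ih _)

theorem mul_compl_add_of_le_compl {a b : α} (h : a ≤ bᶜ) : (a + b) * bᶜ = a := by
  refine le_antisymm ?_ ?_
  · rw [mul_comm, add_comm]
    exact compl_mul_add_le b a
  · have : aᶜ ⊔ b ≤ aᶜ := sup_le le_rfl (le_compl_comm.1 h)
    rw [sup_def, compl_compl] at this
    rwa [mul_compl_eq_compl_add, ← compl_le_compl_iff, compl_compl]

theorem inf_eq_mul_compl_add (a b : α) : a ⊓ b = a * (aᶜ + b) := by
  rw [inf_comm]
  show (bᶜ ⊔ aᶜ)ᶜ = _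
  rw [sup_def, compl_add, compl_compl, compl_compl, mul_comm, add_comm, compl_compl]

theorem inf_add_mul_compl (a b : α) : a ⊓ b + a * bᶜ = a := by
  have h : a * (aᶜ + b) + (aᶜ + b)ᶜ = a ⊔ (aᶜ + b)ᶜ := by
    rw [sup_eq_mul_compl_add, compl_compl]
  rw [inf_eq_mul_compl_add, mul_compl_eq_compl_add, h, sup_eq_left, ← mul_compl_eq_compl_add]
  exact mul_le_left a bᶜ

-- With `v := c + b = a ⊔ b`, the element `c ⊓ d` lies below `vᶜ` and is absorbed by `v`,
-- so it equals `v * vᶜ = 0`.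
theorem mul_compl_inf_mul_compl (a b : α) : a * bᶜ ⊓ b * aᶜ = 0 := by
  set c := a * bᶜ
  set d := b * aᶜ
  have hv : c + b = d + a := by
    simpa only [sup_eq_mul_compl_add] using sup_comm a b
  have hle : c ⊓ d ≤ (c + b)ᶜ := by
    rw [← sup_eq_mul_compl_add, compl_sup]
    exact le_inf (inf_le_right.trans (mul_le_right b aᶜ))
      (inf_le_left.trans (mul_le_right a bᶜ))
  have hadd : c ⊓ d + (c + b) = c + b :=
    calc c ⊓ d + (c + b) = (c + b + c) ⊓ (c + b + d) := by rw [add_comm, add_inf]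
      _ = (c + d + a) ⊓ (c + d + b) := by
        congr 1
        · rw [hv]; abel
        · abel
      _ = a ⊓ b + c + d := by rw [← add_inf]; abel
      _ = c + b := by rw [inf_add_mul_compl, hv, add_comm]
  calc c ⊓ d = (c ⊓ d + (c + b)) * (c + b)ᶜ := (mul_compl_add_of_le_compl hle).symm
    _ = 0 := by rw [hadd, mul_compl_self]

theorem le_total_of_forall_exists_nsmul_eq_one (h : ∀ a : α, a ≠ 0 → ∃ k : ℕ, k • a = 1)
    (a b : α) : a ≤ b ∨ b ≤ a := by
  rw [← mul_compl_eq_zero_iff, ← mul_compl_eq_zero_iff]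
  refine or_iff_not_imp_left.2 fun hab => ?_
  obtain ⟨k, hk⟩ := h _ hab
  have := inf_nsmul_le (b * aᶜ) (a * bᶜ) k
  rwa [hk, inf_of_le_left (le_one _), inf_comm, mul_compl_inf_mul_compl, nsmul_zero,
    nonpos_iff_eq_zero] at this

theorem mul_compl_add_of_le {a b : α} (h : a ≤ b) : b * aᶜ + a = b := by
  rw [← sup_eq_mul_compl_add, sup_eq_left.2 h]

theorem mul_add_compl_of_compl_le {a b : α} (h : aᶜ ≤ b) : b * a + aᶜ = b := by
  simpa using mul_compl_add_of_le h

theorem add_mul_eq_mul_add_of_le_compl {a b c : α} (ha : a ≤ bᶜ) (hc : c ≤ bᶜ) :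
    (a + b) * c = a * (b + c) :=
  calc (a + b) * c = (a + b) * ((c + b) * bᶜ) := by rw [mul_compl_add_of_le_compl hc]
    _ = (a + b) * bᶜ * (c + b) := by ac_rfl
    _ = a * (b + c) := by rw [mul_compl_add_of_le_compl ha, add_comm]

theorem add_mul_eq_add_mul_of_le_compl {a b c : α} (ha : a ≤ bᶜ) (hc : bᶜ ≤ c) :
    (a + b) * c = a + b * c := by
  have hle : a + b * c ≤ c :=
    calc a + b * c ≤ bᶜ + b * c := add_le_add_left ha _
      _ = c := by rw [add_comm, mul_comm, mul_add_compl_of_compl_le hc]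
  have hsum : a + b * c + cᶜ = a + b := by
    rw [add_assoc, mul_add_compl_of_compl_le (compl_le_comm.1 hc)]
  simpa [hsum] using
    mul_compl_add_of_le_compl (a := a + b * c) (b := cᶜ) (by rwa [compl_compl])

theorem mul_add_eq_add_mul_of_compl_le {a b c : α} (ha : aᶜ ≤ b) (hc : cᶜ ≤ b) :
    a * b + c = a + b * c := by
  apply compl_injective
  rw [compl_add, compl_mul, compl_add, compl_mul]
  exact add_mul_eq_mul_add_of_le_compl (by rwa [compl_compl]) (by rwa [compl_compl])

theorem mul_add_eq_mul_add_of_compl_le {a b c : α} (ha : aᶜ ≤ b) (hc : b ≤ cᶜ) :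
    a * b + c = a * (b + c) := by
  apply compl_injective
  rw [compl_add, compl_mul, compl_mul, compl_add]
  exact add_mul_eq_add_mul_of_le_compl (by rwa [compl_compl]) (by rwa [compl_compl])

theorem mul_ne_one_of_left {a : α} (h : a ≠ 1) (b : α) : a * b ≠ 1 :=
  fun h' => h (le_antisymm (le_one a) (h' ▸ mul_le_left a b))

theorem compl_ne_one {a : α} (h : a ≠ 0) : aᶜ ≠ 1 := by
  rwa [← compl_zero, compl_injective.ne_iff]

theorem le_compl_of_add_ne_one [Std.Total (α := α) (· ≤ ·)] {a b : α} (h : a + b ≠ 1) :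
    a ≤ bᶜ :=
  (Std.Total.total a bᶜ).resolve_right fun h' => h (by rwa [add_comm, add_eq_one_iff_compl_le])

/-- Chang's group of an MV-chain: `⟨n, a, _⟩` stands for the real number `n + a` with
`0 ≤ a < 1`, and addition carries into `int` when the fractional parts sum to `1`. -/
@[ext]
structure ChangGroup (α : Type*) [MV α] where
  int : ℤ
  frac : α
  frac_ne_one : frac ≠ 1

namespace ChangGroup

open Classical in
noncomputable instance : Add (ChangGroup α) where
  add x y :=
    if h : x.frac + y.frac = 1 then
      ⟨x.int + y.int + 1, x.frac * y.frac, mul_ne_one_of_left x.frac_ne_one _⟩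
    else ⟨x.int + y.int, x.frac + y.frac, h⟩

theorem mk_add_mk_of_eq_one {n m : ℤ} {a b : α} {ha : a ≠ 1} {hb : b ≠ 1} (h : a + b = 1) :
    (⟨n, a, ha⟩ + ⟨m, b, hb⟩ : ChangGroup α) = ⟨n + m + 1, a * b, mul_ne_one_of_left ha b⟩ :=
  dif_pos h

theorem mk_add_mk_of_ne_one {n m : ℤ} {a b : α} {ha : a ≠ 1} {hb : b ≠ 1} (h : a + b ≠ 1) :
    (⟨n, a, ha⟩ + ⟨m, b, hb⟩ : ChangGroup α) = ⟨n + m, a + b, h⟩ :=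
  dif_neg h

protected theorem add_comm (x y : ChangGroup α) : x + y = y + x := by
  obtain ⟨n, a, ha⟩ := x
  obtain ⟨m, b, hb⟩ := y
  by_cases h : a + b = 1
  · rw [mk_add_mk_of_eq_one h, mk_add_mk_of_eq_one (add_comm a b ▸ h)]
    ext <;> simp [mul_comm]; ring
  · rw [mk_add_mk_of_ne_one h, mk_add_mk_of_ne_one (add_comm a b ▸ h)]
    ext <;> simp [add_comm]

instance : LE (ChangGroup α) := ⟨fun x y => x.int < y.int ∨ x.int = y.int ∧ x.frac ≤ y.frac⟩

protected theorem add_le_add_left {x y : ChangGroup α} (hxy : x ≤ y) (z : ChangGroup α) :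
    x + z ≤ y + z := by
  obtain ⟨n, a, ha⟩ := x
  obtain ⟨m, b, hb⟩ := y
  obtain ⟨k, c, hc⟩ := z
  rcases hxy with hnm | ⟨hnm, hab⟩ <;> dsimp only at hnm
  · by_cases h₁ : a + c = 1 <;> by_cases h₂ : b + c = 1
    · rw [mk_add_mk_of_eq_one h₁, mk_add_mk_of_eq_one h₂]
      exact Or.inl (by dsimp only; omega)
    · rw [mk_add_mk_of_eq_one h₁, mk_add_mk_of_ne_one h₂]
      rcases (by omega : n + 1 < m ∨ n + 1 = m) with h | h
      · exact Or.inl (by dsimp only; omega)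
      · exact Or.inr ⟨by dsimp only; omega, (mul_le_right a c).trans le_add_self⟩
    · rw [mk_add_mk_of_ne_one h₁, mk_add_mk_of_eq_one h₂]
      exact Or.inl (by dsimp only; omega)
    · rw [mk_add_mk_of_ne_one h₁, mk_add_mk_of_ne_one h₂]
      exact Or.inl (by dsimp only; omega)
  · subst hnm
    by_cases h₂ : b + c = 1
    · rw [mk_add_mk_of_eq_one h₂]
      by_cases h₁ : a + c = 1
      · rw [mk_add_mk_of_eq_one h₁]
        exact Or.inr ⟨rfl, mul_le_mul_left hab c⟩
      · rw [mk_add_mk_of_ne_one h₁]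
        exact Or.inl (by dsimp only; omega)
    · have h₁ : a + c ≠ 1 := fun h => h₂ (one_le_iff_eq_one.1 (h ▸ add_le_add_left hab c))
      rw [mk_add_mk_of_ne_one h₁, mk_add_mk_of_ne_one h₂]
      exact Or.inr ⟨rfl, add_le_add_left hab c⟩

section Nontrivial

variable [NeZero (1 : α)]

instance : Zero (ChangGroup α) := ⟨⟨0, 0, zero_ne_one⟩⟩

instance : One (ChangGroup α) := ⟨⟨1, 0, zero_ne_one⟩⟩

theorem zero_def : (0 : ChangGroup α) = ⟨0, 0, zero_ne_one⟩ := rfl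

theorem one_def : (1 : ChangGroup α) = ⟨1, 0, zero_ne_one⟩ := rfl

instance : ZeroLEOneClass (ChangGroup α) := ⟨Or.inl zero_lt_one⟩

instance : NeZero (1 : ChangGroup α) :=
  ⟨fun h => by simpa [one_def, zero_def] using congrArg int h⟩

protected theorem zero_add (x : ChangGroup α) : 0 + x = x := by
  obtain ⟨n, a, ha⟩ := x
  rw [zero_def, mk_add_mk_of_ne_one (by rwa [zero_add])]
  ext <;> simp

open Classical in
noncomputable instance : Neg (ChangGroup α) where
  neg x := if h : x.frac = 0 then ⟨-x.int, 0, zero_ne_one⟩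
    else ⟨-x.int - 1, x.fracᶜ, compl_ne_one h⟩

protected theorem neg_add_cancel (x : ChangGroup α) : -x + x = 0 := by
  obtain ⟨n, a, ha⟩ := x
  by_cases h : a = 0
  · subst h
    rw [show -(⟨n, 0, ha⟩ : ChangGroup α) = ⟨-n, 0, zero_ne_one⟩ from dif_pos rfl,
      mk_add_mk_of_ne_one (by rwa [zero_add])]
    ext <;> simp [zero_def]
  · rw [show -(⟨n, a, ha⟩ : ChangGroup α) = ⟨-n - 1, aᶜ, compl_ne_one h⟩ from dif_neg h,
      mk_add_mk_of_eq_one (compl_add_self a)]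
    ext <;> simp [zero_def, mul_comm]
    ring

open Classical in
noncomputable def of (a : α) : ChangGroup α := if h : a = 1 then 1 else ⟨0, a, h⟩

theorem of_of_ne_one {a : α} (h : a ≠ 1) : of a = ⟨0, a, h⟩ := dif_neg h

@[simp] theorem of_one : of (1 : α) = 1 := dif_pos rfl

@[simp] theorem of_zero : of (0 : α) = 0 := of_of_ne_one zero_ne_one

theorem of_injective : Function.Injective (of : α → ChangGroup α) := by
  intro a b h
  by_cases ha : a = 1 <;> by_cases hb : b = 1
  · rw [ha, hb]
  · rw [ha, of_one, of_of_ne_one hb] at h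
    exact absurd (congrArg int h) (by simp [one_def])
  · rw [hb, of_one, of_of_ne_one ha] at h
    exact absurd (congrArg int h) (by simp [one_def])
  · rw [of_of_ne_one ha, of_of_ne_one hb] at h
    exact congrArg frac h

theorem zero_le_of (a : α) : 0 ≤ of a := by
  by_cases ha : a = 1
  · rw [ha, of_one, one_def]
    exact Or.inl zero_lt_one
  · rw [of_of_ne_one ha]
    exact Or.inr ⟨rfl, zero_le⟩

theorem of_le_one (a : α) : of a ≤ 1 := by
  by_cases ha : a = 1
  · rw [ha, of_one]
    exact Or.inr ⟨rfl, le_rfl⟩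
  · rw [of_of_ne_one ha]
    exact Or.inl zero_lt_one

theorem of_compl_add_of (a : α) : of aᶜ + of a = 1 := by
  by_cases h₀ : a = 0
  · rw [h₀, compl_zero, of_one, of_zero, ChangGroup.add_comm, ChangGroup.zero_add]
  by_cases h₁ : a = 1
  · rw [h₁, compl_one, of_one, of_zero, ChangGroup.zero_add]
  rw [of_of_ne_one h₁, of_of_ne_one (compl_ne_one h₀), mk_add_mk_of_eq_one (compl_add_self a)]
  ext <;> simp [one_def, mul_comm]

end Nontrivial

section Chain

variable [Std.Total (α := α) (· ≤ ·)]

-- Each carry pattern reduces to one of the four identities for `(a + b) * c` and `a * b + c`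
-- proved above; in a chain, `a + b ≠ 1` supplies their hypothesis `a ≤ bᶜ`.
protected theorem add_assoc (x y z : ChangGroup α) : x + y + z = x + (y + z) := by
  obtain ⟨n, a, ha⟩ := x
  obtain ⟨m, b, hb⟩ := y
  obtain ⟨k, c, hc⟩ := z
  by_cases hab : a + b = 1 <;> by_cases hbc : b + c = 1
  · have e : a * b + c = a + b * c := mul_add_eq_add_mul_of_compl_le
      (add_eq_one_iff_compl_le.1 hab) (by rwa [add_comm, add_eq_one_iff_compl_le] at hbc)
    rw [mk_add_mk_of_eq_one hab, mk_add_mk_of_eq_one hbc]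
    by_cases h : a * b + c = 1
    · rw [mk_add_mk_of_eq_one h, mk_add_mk_of_eq_one (e ▸ h)]
      ext <;> simp [mul_assoc]; ring
    · rw [mk_add_mk_of_ne_one h, mk_add_mk_of_ne_one (e ▸ h)]
      ext <;> simp [e]; ring
  · have h₁ : a * b + c ≠ 1 := fun h =>
      hbc (one_le_iff_eq_one.1 (h ▸ add_le_add_left (mul_le_right a b) c))
    have h₂ : a + (b + c) = 1 := by rw [← add_assoc, hab, one_add]
    rw [mk_add_mk_of_eq_one hab, mk_add_mk_of_ne_one hbc, mk_add_mk_of_ne_one h₁,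
      mk_add_mk_of_eq_one h₂]
    ext <;> simp [mul_add_eq_mul_add_of_compl_le (add_eq_one_iff_compl_le.1 hab)
      (le_compl_of_add_ne_one hbc)]
    ring
  · have h₁ : a + b * c ≠ 1 := fun h =>
      hab (one_le_iff_eq_one.1 (h ▸ add_le_add_right (mul_le_left b c) a))
    have h₂ : a + b + c = 1 := by rw [add_assoc, hbc, add_one]
    rw [mk_add_mk_of_ne_one hab, mk_add_mk_of_eq_one hbc, mk_add_mk_of_eq_one h₂,
      mk_add_mk_of_ne_one h₁]
    ext <;> simp [add_mul_eq_add_mul_of_le_compl (le_compl_of_add_ne_one hab)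
      (add_eq_one_iff_compl_le.1 hbc)]
    ring
  · rw [mk_add_mk_of_ne_one hab, mk_add_mk_of_ne_one hbc]
    by_cases h : a + b + c = 1
    · rw [mk_add_mk_of_eq_one h, mk_add_mk_of_eq_one (add_assoc a b c ▸ h)]
      ext <;> simp [add_mul_eq_mul_add_of_le_compl (le_compl_of_add_ne_one hab)
        (le_compl_of_add_ne_one (by rwa [add_comm] at hbc))]
      ring
    · rw [mk_add_mk_of_ne_one h, mk_add_mk_of_ne_one (add_assoc a b c ▸ h)]
      ext <;> simp [add_assoc]

noncomputable instance : LinearOrder (ChangGroup α) where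
  le_refl _ := Or.inr ⟨rfl, le_rfl⟩
  le_trans x y z := by
    rintro (h | ⟨h, h'⟩) (k | ⟨k, k'⟩)
    · exact Or.inl (h.trans k)
    · exact Or.inl (k ▸ h)
    · exact Or.inl (h ▸ k)
    · exact Or.inr ⟨h.trans k, h'.trans k'⟩
  le_antisymm x y := by
    rintro (h | ⟨h, h'⟩) (k | ⟨k, k'⟩)
    · omega
    · omega
    · omega
    · exact ChangGroup.ext h (le_antisymm h' k')
  le_total x y := by
    rcases lt_trichotomy x.int y.int with h | h | h
    · exact Or.inl (Or.inl h)
    · rcases Std.Total.total (r := (· ≤ ·)) x.frac y.frac with h' | h'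
      exacts [Or.inl (Or.inr ⟨h, h'⟩), Or.inr (Or.inr ⟨h.symm, h'⟩)]
    · exact Or.inr (Or.inl h)
  toDecidableLE := Classical.decRel _

variable [NeZero (1 : α)]

noncomputable instance : AddCommGroup (ChangGroup α) where
  add_assoc := ChangGroup.add_assoc
  zero_add := ChangGroup.zero_add
  add_zero x := (ChangGroup.add_comm x 0).trans (ChangGroup.zero_add x)
  add_comm := ChangGroup.add_comm
  neg_add_cancel := ChangGroup.neg_add_cancel
  nsmul := nsmulRec
  zsmul := zsmulRec

instance : IsOrderedAddMonoid (ChangGroup α) where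
  add_le_add_left _ _ h z := ChangGroup.add_le_add_left h z

theorem nsmul_one (n : ℕ) : n • (1 : ChangGroup α) = ⟨n, 0, zero_ne_one⟩ := by
  induction n with
  | zero => rfl
  | succ n ih =>
    rw [succ_nsmul, ih, one_def, mk_add_mk_of_ne_one (by rw [zero_add]; exact zero_ne_one)]
    ext <;> simp

theorem exists_le_nsmul_one (x : ChangGroup α) : ∃ N : ℕ, x ≤ N • 1 :=
  ⟨x.int.toNat + 1, by rw [nsmul_one]; exact Or.inl (by dsimp only; omega)⟩

theorem one_le_of_add_of {a b : α} (h : a + b = 1) : 1 ≤ of a + of b := by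
  by_cases ha : a = 1
  · rw [ha, of_one]
    exact le_add_of_nonneg_right (zero_le_of b)
  by_cases hb : b = 1
  · rw [hb, of_one]
    exact le_add_of_nonneg_left (zero_le_of a)
  rw [of_of_ne_one ha, of_of_ne_one hb, mk_add_mk_of_eq_one h]
  exact Or.inr ⟨rfl, zero_le⟩

theorem of_add (a b : α) : of (a + b) = min (of a + of b) 1 := by
  by_cases h : a + b = 1
  · rw [h, of_one, min_eq_right (one_le_of_add_of h)]
  · have ha : a ≠ 1 := fun ha => h (by rw [ha, one_add])
    have hb : b ≠ 1 := fun hb => h (by rw [hb, add_one])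
    have e : of (a + b) = of a + of b := by
      rw [of_of_ne_one ha, of_of_ne_one hb, mk_add_mk_of_ne_one h, of_of_ne_one h]
      rfl
    rw [← e, min_eq_left (of_le_one _)]

theorem of_nsmul_le (a : α) (k : ℕ) : of (k • a) ≤ k • of a := by
  induction k with
  | zero => simp
  | succ k ih =>
    rw [succ_nsmul, succ_nsmul, of_add]
    exact (min_le_left _ _).trans (add_le_add_left ih _)

theorem exists_one_le_nsmul (h : ∀ a : α, a ≠ 0 → ∃ k : ℕ, k • a = 1) {y : ChangGroup α}
    (hy : 0 < y) : ∃ k : ℕ, 1 ≤ k • y := by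
  obtain ⟨m, b, hb⟩ := y
  rw [zero_def] at hy
  rcases hy.le with hm | ⟨hm, -⟩ <;> dsimp only at hm
  · refine ⟨1, ?_⟩
    rw [one_nsmul, one_def]
    rcases (by omega : 1 < m ∨ 1 = m) with h | h
    exacts [Or.inl h, Or.inr ⟨h, zero_le⟩]
  · subst hm
    have hb₀ : b ≠ 0 := by
      rintro rfl
      exact hy.ne rfl
    obtain ⟨k, hk⟩ := h b hb₀
    refine ⟨k, ?_⟩
    simpa [hk, of_of_ne_one hb] using of_nsmul_le b k

theorem archimedean (h : ∀ a : α, a ≠ 0 → ∃ k : ℕ, k • a = 1) :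
    Archimedean (ChangGroup α) := by
  refine ⟨fun x y hy => ?_⟩
  obtain ⟨k, hk⟩ := exists_one_le_nsmul h hy
  obtain ⟨N, hN⟩ := exists_le_nsmul_one x
  exact ⟨N * k, hN.trans (by rw [mul_nsmul']; exact nsmul_le_nsmul_right hk N)⟩

end Chain

end ChangGroup

theorem isIdeal_setOf_le_nsmul (a : α) : MV.IsIdeal {b : α | ∃ k : ℕ, b ≤ k • a} :=
  ⟨⟨0, zero_le⟩, fun _ _ ⟨k, hk⟩ ⟨m, hm⟩ => ⟨k + m, add_nsmul a k m ▸ add_le_add hk hm⟩,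
    fun _ _ hxy ⟨k, hk⟩ => ⟨k, le_trans hxy hk⟩⟩

theorem exists_nsmul_eq_one_of_simple [NeZero (1 : α)]
    (h : ∀ J : Set α, MV.IsIdeal J → J ≠ Set.univ → J = {0}) {a : α} (ha : a ≠ 0) :
    ∃ k : ℕ, 1 ≤ k ∧ k • a = 1 := by
  set J := {b : α | ∃ k : ℕ, b ≤ k • a}
  have hJ : J = Set.univ := by
    by_contra hJ
    have : a ∈ J := ⟨1, (one_nsmul a).ge⟩
    rw [h J (isIdeal_setOf_le_nsmul a) hJ] at this
    exact ha this
  obtain ⟨k, hk⟩ : (1 : α) ∈ J := hJ ▸ Set.mem_univ 1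
  refine ⟨k, Nat.one_le_iff_ne_zero.2 ?_, one_le_iff_eq_one.1 hk⟩
  rintro rfl
  exact one_ne_zero ((one_le_iff_eq_one.1 hk).symm.trans (zero_nsmul a))

theorem _root_.MV.IsIdeal.nsmul_mem {J : Set α} (hJ : MV.IsIdeal J) {a : α} (ha : a ∈ J)
    (k : ℕ) : k • a ∈ J := by
  induction k with
  | zero => exact hJ.1
  | succ k ih => exact hJ.2.1 a _ ha ih

theorem _root_.MV.IsIdeal.eq_singleton_zero_of_ne_univ {J : Set α} (hJ : MV.IsIdeal J)
    (hne : J ≠ Set.univ) (h : ∀ a : α, a ≠ 0 → ∃ k : ℕ, k • a = 1) : J = {0} := by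
  refine Set.eq_singleton_iff_unique_mem.2 ⟨hJ.1, fun a ha => by_contra fun ha₀ => hne ?_⟩
  obtain ⟨k, hk⟩ := h a ha₀
  exact Set.eq_univ_of_forall fun b => hJ.2.2 b 1 (le_one b) (hk ▸ hJ.nsmul_mem ha k)

open ChangGroup in
theorem exists_hom_injective_of_forall_exists_nsmul_eq_one [NeZero (1 : α)]
    (h : ∀ a : α, a ≠ 0 → ∃ k : ℕ, k • a = 1) :
    ∃ f : α → ℝ, MV.Hom f ∧ Function.Injective f := by
  have : Std.Total (α := α) (· ≤ ·) := ⟨le_total_of_forall_exists_nsmul_eq_one h⟩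
  have := archimedean h
  set e := Archimedean.embedReal (ChangGroup α)
  have he : Monotone e := OrderHomClass.mono e
  have he₁ : e 1 = 1 := Archimedean.embedReal_one
  refine ⟨fun a => e (of a), ⟨fun a => ⟨?_, ?_⟩, fun a b => ?_, fun a => ?_, ?_⟩,
    (Archimedean.embedReal_injective _).comp of_injective⟩
  · simpa using he (zero_le_of a)
  · simpa [he₁] using he (of_le_one a)
  · show e (of (a + b)) = min (e (of a) + e (of b)) 1
    rw [of_add, he.map_min, map_add, he₁]
  · show e (of aᶜ) = 1 - e (of a)
    rw [eq_sub_iff_add_eq, ← map_add, of_compl_add_of, he₁]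
  · show e (of 0) = 0
    simp

theorem _root_.MV.Hom.map_nsmul {f : α → ℝ} (hf : MV.Hom f) (a : α) (k : ℕ) :
    f (k • a) = min (k * f a) 1 := by
  induction k with
  | zero =>
    rw [zero_nsmul, Nat.cast_zero, zero_mul, min_eq_left zero_le_one]
    exact hf.2.2.2
  | succ k ih =>
    rw [succ_nsmul, show f (k • a + a) = _ from hf.2.1 _ _, ih, ← min_add_add_right, min_assoc,
      min_eq_right (le_add_of_nonneg_right (hf.1 a).1)]
    push_cast
    ring_nf

theorem exists_nsmul_eq_one_of_hom {f : α → ℝ} (hf : MV.Hom f) (hinj : Function.Injective f)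
    {a : α} (ha : a ≠ 0) : ∃ k : ℕ, 1 ≤ k ∧ k • a = 1 := by
  have hzero : f 0 = 0 := hf.2.2.2
  have hpos : 0 < f a := (hf.1 a).1.lt_of_ne fun h => ha (hinj (h.symm.trans hzero.symm))
  set k := ⌈(f a)⁻¹⌉₊
  have hk : 1 ≤ k * f a :=
    calc 1 = (f a)⁻¹ * f a := (inv_mul_cancel₀ hpos.ne').symm
      _ ≤ k * f a := mul_le_mul_of_nonneg_right (Nat.le_ceil _) hpos.le
  refine ⟨k, ?_, hinj ?_⟩
  · exact_mod_cast (show (1 : ℝ) ≤ k by nlinarith [(hf.1 a).2])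
  · have hone : f 0ᶜ = 1 - f 0 := hf.2.2.1 0
    rw [hf.map_nsmul, min_eq_right hk, ← compl_zero, hone, hzero, sub_zero]

end MVAlgebra

open MVAlgebra in
/-- for a nontrivial MV-algebra N the following are equivalent:
(a) N is simple ({0} is the only proper ideal); (b) every nonzero element has
finite order; (c) N embeds (injectively, preserving the operations) into the
standard MV-algebra [0,1]. -/
theorem stmt_16 {α : Type*} [MV α] (hnt : (MV.zero : α) ≠ MV.one) :
    List.TFAE
      [(∀ J : Set α, MV.IsIdeal J → J ≠ Set.univ → J = {(MV.zero : α)}),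
       (∀ a : α, a ≠ MV.zero → ∃ k : ℕ, 1 ≤ k ∧ MV.smul k a = MV.one),
       (∃ h : α → ℝ, MV.Hom h ∧ Function.Injective h)] := by
  have : NeZero (1 : α) := ⟨hnt.symm⟩
  tfae_have 1 → 2 := fun h _ ha => exists_nsmul_eq_one_of_simple h ha
  tfae_have 2 → 1 := fun h _ hJ hne =>
    hJ.eq_singleton_zero_of_ne_univ hne fun a ha => (h a ha).imp fun _ => And.right
  tfae_have 2 → 3 := fun h =>
    exists_hom_injective_of_forall_exists_nsmul_eq_one fun a ha => (h a ha).imp fun _ => And.right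
  tfae_have 3 → 2 := fun ⟨_, hf, hinj⟩ _ ha => exists_nsmul_eq_one_of_hom hf hinj ha
  tfae_finish
end
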